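/- arXiv:2212.14501 — 8 statements merged into one kernel-verified Lean document; each statement's English description precedes it below -/
import Mathlib

section
/- The coefficients d_i(m) = 2^{-2m} ∑_{k=i}^m 2^k C(2m-2k, m-k) C(m+k, k) C(k, i) satisfy the recurrence 2(m+1) d_i(m+1) = 2(m+i) d_{i-1}(m) + (4m+2i+3) d_i(m) for 0 ≤ i ≤ m+1, with the convention d_{-1}(m) = 0. -/
open Finset

/-- Coefficients of the Boros-Moll polynomial, with `d i m = 0` for `i < 0` or `i > m`. -/
noncomputable def bmD (m : ℕ) (i : ℤ) : ℝ :=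
  if 0 ≤ i ∧ i ≤ (m : ℤ) then
    (1 / 4 ^ m) * ∑ k ∈ Finset.Icc i.toNat m,
      (2 : ℝ) ^ k * ((2 * m - 2 * k).choose (m - k)) * ((m + k).choose k) * (k.choose i.toNat)
  else 0

private lemma bm_rL0 (n : ℕ) :
    ((2 * n + 2).choose (n + 1) : ℝ) = 2 * ((2 * n + 1).choose (n + 1)) := by
  have h2 : (2 * n + 2).choose (n + 1) = (2 * n + 1).choose n + (2 * n + 1).choose (n + 1) := by
    rw [show 2 * n + 2 = (2 * n + 1) + 1 by ring]
    exact Nat.choose_succ_succ _ _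
  have h3 : (2 * n + 1).choose n = (2 * n + 1).choose (n + 1) := by
    rw [← Nat.choose_symm (show n + 1 ≤ 2 * n + 1 by omega)]
    congr 1
    omega
  rw [h2, h3]
  push_cast
  ring

private lemma bm_rL1 (n : ℕ) :
    ((n : ℝ) + 1) * ((2 * n + 2).choose (n + 1)) = 2 * (2 * (n : ℝ) + 1) * ((2 * n).choose n) := by
  have h1 := Nat.add_one_mul_choose_eq (2 * n) n
  have h1' : ((2 * n + 1) * (2 * n).choose n : ℕ) = ((2 * n + 1).choose (n + 1) * (n + 1) : ℕ) := h1
  have hc : ((2 * n : ℝ) + 1) * ((2 * n).choose n) = ((2 * n + 1).choose (n + 1) : ℝ) * ((n : ℝ) + 1) := by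
    exact_mod_cast congrArg (Nat.cast : ℕ → ℝ) h1'
  rw [bm_rL0 n]
  linear_combination -2 * hc

private lemma bm_rL2 (m k : ℕ) :
    ((m : ℝ) + 1) * ((m + k + 1).choose k) = ((m : ℝ) + k + 1) * ((m + k).choose k) := by
  have h := Nat.choose_mul_succ_eq (m + k) k
  rw [show m + k + 1 - k = m + 1 by omega] at h
  have hc : ((m + k).choose k : ℝ) * ((m : ℝ) + k + 1) = ((m + k + 1).choose k : ℝ) * ((m : ℝ) + 1) := by
    exact_mod_cast congrArg (Nat.cast : ℕ → ℝ) h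
  linear_combination -hc

private lemma bm_rL3 (m k : ℕ) :
    ((k : ℝ) + 1) * ((m + k + 1).choose (k + 1)) = ((m : ℝ) + k + 1) * ((m + k).choose k) := by
  have h := Nat.add_one_mul_choose_eq (m + k) k
  have h' : ((m + k + 1) * (m + k).choose k : ℕ) = ((m + k + 1).choose (k + 1) * (k + 1) : ℕ) := h
  have hc : ((m : ℝ) + k + 1) * ((m + k).choose k) = ((m + k + 1).choose (k + 1) : ℝ) * ((k : ℝ) + 1) := by
    exact_mod_cast congrArg (Nat.cast : ℕ → ℝ) h'
  linear_combination -hc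

private lemma bm_rL5 (k jj : ℕ) :
    (k.choose (jj + 1) : ℝ) * ((jj : ℝ) + 1) = (k.choose jj : ℝ) * ((k : ℝ) - jj) := by
  rcases le_or_gt jj k with h | h
  · have hn := Nat.choose_succ_right_eq k jj
    have hc : (k.choose (jj + 1) : ℝ) * ((jj : ℝ) + 1) = (k.choose jj : ℝ) * ((k - jj : ℕ) : ℝ) := by
      exact_mod_cast congrArg (Nat.cast : ℕ → ℝ) hn
    rw [hc, Nat.cast_sub h]
  · rw [Nat.choose_eq_zero_of_lt h, Nat.choose_eq_zero_of_lt (by omega)]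
    simp

private lemma bm_key1 (m jj k : ℕ) (hk : k ≤ m) :
    2 * ((m : ℝ) + 1) * ((2 : ℝ) ^ k * ((2 * (m + 1) - 2 * k).choose (m + 1 - k)) *
        ((m + 1 + k).choose k) * (k.choose (jj + 1)))
    = 8 * ((m : ℝ) + (jj + 1)) * ((2 : ℝ) ^ k * ((2 * m - 2 * k).choose (m - k)) *
        ((m + k).choose k) * (k.choose jj))
    + 4 * (4 * (m : ℝ) + 2 * (jj + 1) + 3) * ((2 : ℝ) ^ k * ((2 * m - 2 * k).choose (m - k)) *
        ((m + k).choose k) * (k.choose (jj + 1)))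
    + 4 * ((k : ℝ) * 2 ^ k * ((2 * (m + 1) - 2 * k).choose (m + 1 - k)) *
        ((m + k).choose k) * (k.choose (jj + 1))
      - ((k : ℝ) + 1) * 2 ^ (k + 1) * ((2 * (m + 1) - 2 * (k + 1)).choose (m + 1 - (k + 1))) *
        ((m + (k + 1)).choose (k + 1)) * ((k + 1).choose (jj + 1))) := by
  obtain ⟨n, rfl⟩ : ∃ n, m = n + k := ⟨m - k, by omega⟩
  rw [show 2 * (n + k + 1) - 2 * k = 2 * n + 2 by omega,
      show n + k + 1 - k = n + 1 by omega,
      show 2 * (n + k) - 2 * k = 2 * n by omega,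
      show n + k - k = n by omega,
      show 2 * (n + k + 1) - 2 * (k + 1) = 2 * n by omega,
      show n + k + 1 - (k + 1) = n by omega,
      show n + k + (k + 1) = n + k + k + 1 by omega,
      show n + k + 1 + k = n + k + k + 1 by omega]
  have h1 := bm_rL1 n
  have h2 := bm_rL2 (n + k) k
  have h3 := bm_rL3 (n + k) k
  have h4 : ((k + 1).choose (jj + 1) : ℝ) = (k.choose jj : ℝ) + (k.choose (jj + 1) : ℝ) := by
    exact_mod_cast congrArg (Nat.cast : ℕ → ℝ) (Nat.choose_succ_succ k jj)
  have h5 := bm_rL5 k jj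
  push_cast at h2 h3 ⊢
  linear_combination (2 * (2:ℝ) ^ k * ((2 * n + 2).choose (n + 1)) * (k.choose (jj + 1))) * h2
    + (8 * (2:ℝ) ^ k * ((2 * n).choose n) * ((k + 1).choose (jj + 1))) * h3
    + (2 * (2:ℝ) ^ k * ((n + k + k).choose k) * (k.choose (jj + 1))) * h1
    + (8 * (2:ℝ) ^ k * ((n : ℝ) + 2 * k + 1) * ((2 * n).choose n) * ((n + k + k).choose k)) * h4
    - (8 * (2:ℝ) ^ k * ((2 * n).choose n) * ((n + k + k).choose k)) * h5

private lemma bm_key0 (m k : ℕ) (hk : k ≤ m) :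
    2 * ((m : ℝ) + 1) * ((2 : ℝ) ^ k * ((2 * (m + 1) - 2 * k).choose (m + 1 - k)) *
        ((m + 1 + k).choose k) * (k.choose 0))
    = 4 * (4 * (m : ℝ) + 2 * 0 + 3) * ((2 : ℝ) ^ k * ((2 * m - 2 * k).choose (m - k)) *
        ((m + k).choose k) * (k.choose 0))
    + 4 * ((k : ℝ) * 2 ^ k * ((2 * (m + 1) - 2 * k).choose (m + 1 - k)) *
        ((m + k).choose k) * (k.choose 0)
      - ((k : ℝ) + 1) * 2 ^ (k + 1) * ((2 * (m + 1) - 2 * (k + 1)).choose (m + 1 - (k + 1))) *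
        ((m + (k + 1)).choose (k + 1)) * ((k + 1).choose 0)) := by
  obtain ⟨n, rfl⟩ : ∃ n, m = n + k := ⟨m - k, by omega⟩
  rw [show 2 * (n + k + 1) - 2 * k = 2 * n + 2 by omega,
      show n + k + 1 - k = n + 1 by omega,
      show 2 * (n + k) - 2 * k = 2 * n by omega,
      show n + k - k = n by omega,
      show 2 * (n + k + 1) - 2 * (k + 1) = 2 * n by omega,
      show n + k + 1 - (k + 1) = n by omega,
      show n + k + (k + 1) = n + k + k + 1 by omega,
      show n + k + 1 + k = n + k + k + 1 by omega]
  have h1 := bm_rL1 n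
  have h2 := bm_rL2 (n + k) k
  have h3 := bm_rL3 (n + k) k
  simp only [Nat.choose_zero_right, Nat.cast_one]
  push_cast at h2 h3 ⊢
  linear_combination (2 * (2:ℝ) ^ k * ((2 * n + 2).choose (n + 1))) * h2
    + (8 * (2:ℝ) ^ k * ((2 * n).choose n)) * h3
    + (2 * (2:ℝ) ^ k * ((n + k + k).choose k)) * h1

private lemma bm_sum_Icc_eq_range (j n : ℕ) (f : ℕ → ℝ) (hf : ∀ k, k < j → f k = 0) :
    ∑ k ∈ Icc j n, f k = ∑ k ∈ range (n + 1), f k := by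
  apply Finset.sum_subset
  · intro x hx
    simp only [mem_Icc] at hx
    simp only [mem_range]
    omega
  · intro x hx hx2
    apply hf
    simp only [mem_Icc, mem_range] at hx hx2
    omega

private lemma bm_keySum1 (m jj : ℕ) :
    2 * ((m : ℝ) + 1) * ∑ k ∈ range (m + 2), (2 : ℝ) ^ k *
        ((2 * (m + 1) - 2 * k).choose (m + 1 - k)) * ((m + 1 + k).choose k) * (k.choose (jj + 1))
    = 8 * ((m : ℝ) + (jj + 1)) * ∑ k ∈ range (m + 1), (2 : ℝ) ^ k *
        ((2 * m - 2 * k).choose (m - k)) * ((m + k).choose k) * (k.choose jj)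
    + 4 * (4 * (m : ℝ) + 2 * (jj + 1) + 3) * ∑ k ∈ range (m + 1), (2 : ℝ) ^ k *
        ((2 * m - 2 * k).choose (m - k)) * ((m + k).choose k) * (k.choose (jj + 1)) := by
  set H : ℕ → ℝ := fun k => (k : ℝ) * 2 ^ k * ((2 * (m + 1) - 2 * k).choose (m + 1 - k)) *
      ((m + k).choose k) * (k.choose (jj + 1)) with hH
  have key : ∀ x ∈ range (m + 1),
      2 * ((m : ℝ) + 1) * ((2 : ℝ) ^ x * ((2 * (m + 1) - 2 * x).choose (m + 1 - x)) *
          ((m + 1 + x).choose x) * (x.choose (jj + 1)))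
      - 8 * ((m : ℝ) + (jj + 1)) * ((2 : ℝ) ^ x * ((2 * m - 2 * x).choose (m - x)) *
          ((m + x).choose x) * (x.choose (jj + 1 - 1)))
      - 4 * (4 * (m : ℝ) + 2 * (jj + 1) + 3) * ((2 : ℝ) ^ x * ((2 * m - 2 * x).choose (m - x)) *
          ((m + x).choose x) * (x.choose (jj + 1)))
      = 4 * H x - 4 * H (x + 1) := by
    intro x hx
    simp only [mem_range] at hx
    have h := bm_key1 m jj x (by omega)
    simp only [hH, Nat.add_sub_cancel]
    push_cast
    push_cast at h
    linear_combination h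
  have tel : ∑ x ∈ range (m + 1), (4 * H x - 4 * H (x + 1)) = 4 * H 0 - 4 * H (m + 1) := by
    simpa using Finset.sum_range_sub' (fun k => 4 * H k) (m + 1)
  have hH0 : H 0 = 0 := by simp [hH]
  have sub : ∑ x ∈ range (m + 1),
      (2 * ((m : ℝ) + 1) * ((2 : ℝ) ^ x * ((2 * (m + 1) - 2 * x).choose (m + 1 - x)) *
          ((m + 1 + x).choose x) * (x.choose (jj + 1)))
      - 8 * ((m : ℝ) + (jj + 1)) * ((2 : ℝ) ^ x * ((2 * m - 2 * x).choose (m - x)) *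
          ((m + x).choose x) * (x.choose (jj + 1 - 1)))
      - 4 * (4 * (m : ℝ) + 2 * (jj + 1) + 3) * ((2 : ℝ) ^ x * ((2 * m - 2 * x).choose (m - x)) *
          ((m + x).choose x) * (x.choose (jj + 1)))) = 4 * H 0 - 4 * H (m + 1) := by
    rw [← tel]
    exact Finset.sum_congr rfl key
  rw [Finset.sum_sub_distrib, Finset.sum_sub_distrib, ← Finset.mul_sum, ← Finset.mul_sum,
    ← Finset.mul_sum] at sub
  rw [Finset.sum_range_succ]
  have e3 : 2 * ((m : ℝ) + 1) * ((2 : ℝ) ^ (m + 1) *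
      ((2 * (m + 1) - 2 * (m + 1)).choose (m + 1 - (m + 1))) *
      ((m + 1 + (m + 1)).choose (m + 1)) * ((m + 1).choose (jj + 1))) = 4 * H (m + 1) := by
    simp only [hH]
    rw [show 2 * (m + 1) - 2 * (m + 1) = 0 by omega, show m + 1 - (m + 1) = 0 by omega,
      show m + 1 + (m + 1) = 2 * m + 2 by omega, show m + (m + 1) = 2 * m + 1 by omega,
      Nat.choose_self, bm_rL0 m]
    push_cast
    ring
  simp only [Nat.add_sub_cancel] at sub
  linear_combination sub + e3 + 4 * hH0

private lemma bm_keySum0 (m : ℕ) :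
    2 * ((m : ℝ) + 1) * ∑ k ∈ range (m + 2), (2 : ℝ) ^ k *
        ((2 * (m + 1) - 2 * k).choose (m + 1 - k)) * ((m + 1 + k).choose k) * (k.choose 0)
    = 4 * (4 * (m : ℝ) + 2 * 0 + 3) * ∑ k ∈ range (m + 1), (2 : ℝ) ^ k *
        ((2 * m - 2 * k).choose (m - k)) * ((m + k).choose k) * (k.choose 0) := by
  set H : ℕ → ℝ := fun k => (k : ℝ) * 2 ^ k * ((2 * (m + 1) - 2 * k).choose (m + 1 - k)) *
      ((m + k).choose k) * (k.choose 0) with hH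
  have key : ∀ x ∈ range (m + 1),
      2 * ((m : ℝ) + 1) * ((2 : ℝ) ^ x * ((2 * (m + 1) - 2 * x).choose (m + 1 - x)) *
          ((m + 1 + x).choose x) * (x.choose 0))
      - 4 * (4 * (m : ℝ) + 2 * 0 + 3) * ((2 : ℝ) ^ x * ((2 * m - 2 * x).choose (m - x)) *
          ((m + x).choose x) * (x.choose 0))
      = 4 * H x - 4 * H (x + 1) := by
    intro x hx
    simp only [mem_range] at hx
    have h := bm_key0 m x (by omega)
    simp only [hH]
    push_cast
    push_cast at h
    linear_combination h
  have tel : ∑ x ∈ range (m + 1), (4 * H x - 4 * H (x + 1)) = 4 * H 0 - 4 * H (m + 1) := by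
    simpa using Finset.sum_range_sub' (fun k => 4 * H k) (m + 1)
  have hH0 : H 0 = 0 := by simp [hH]
  have sub : ∑ x ∈ range (m + 1),
      (2 * ((m : ℝ) + 1) * ((2 : ℝ) ^ x * ((2 * (m + 1) - 2 * x).choose (m + 1 - x)) *
          ((m + 1 + x).choose x) * (x.choose 0))
      - 4 * (4 * (m : ℝ) + 2 * 0 + 3) * ((2 : ℝ) ^ x * ((2 * m - 2 * x).choose (m - x)) *
          ((m + x).choose x) * (x.choose 0))) = 4 * H 0 - 4 * H (m + 1) := by
    rw [← tel]
    exact Finset.sum_congr rfl key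
  rw [Finset.sum_sub_distrib, ← Finset.mul_sum, ← Finset.mul_sum] at sub
  rw [Finset.sum_range_succ]
  have e3 : 2 * ((m : ℝ) + 1) * ((2 : ℝ) ^ (m + 1) *
      ((2 * (m + 1) - 2 * (m + 1)).choose (m + 1 - (m + 1))) *
      ((m + 1 + (m + 1)).choose (m + 1)) * ((m + 1).choose 0)) = 4 * H (m + 1) := by
    simp only [hH]
    rw [show 2 * (m + 1) - 2 * (m + 1) = 0 by omega, show m + 1 - (m + 1) = 0 by omega,
      show m + 1 + (m + 1) = 2 * m + 2 by omega, show m + (m + 1) = 2 * m + 1 by omega,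
      Nat.choose_self, bm_rL0 m]
    push_cast
    ring
  linear_combination sub + e3 + 4 * hH0

theorem boros_moll_recurrence (m : ℕ) (i : ℤ) (h0 : 0 ≤ i) (h1 : i ≤ (m : ℤ) + 1) :
    2 * ((m : ℝ) + 1) * bmD (m + 1) i =
      2 * ((m : ℝ) + (i : ℝ)) * bmD m (i - 1) + (4 * (m : ℝ) + 2 * (i : ℝ) + 3) * bmD m i := by
  obtain ⟨j, rfl⟩ : ∃ j : ℕ, i = (j : ℤ) := ⟨i.toNat, (Int.toNat_of_nonneg h0).symm⟩
  have hj1 : j ≤ m + 1 := by exact_mod_cast h1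
  by_cases hjm : j ≤ m
  · -- main case
    have cA : 0 ≤ ((j : ℕ) : ℤ) ∧ ((j : ℕ) : ℤ) ≤ ((m + 1 : ℕ) : ℤ) := by omega
    have cC : 0 ≤ ((j : ℕ) : ℤ) ∧ ((j : ℕ) : ℤ) ≤ ((m : ℕ) : ℤ) := by omega
    rcases Nat.eq_zero_or_pos j with hj0 | hjpos
    · subst hj0
      have cB : ¬ (0 ≤ ((0 : ℕ) : ℤ) - 1 ∧ ((0 : ℕ) : ℤ) - 1 ≤ ((m : ℕ) : ℤ)) := by omega
      simp only [bmD, if_pos cA, if_pos cC, if_neg cB, Int.toNat_natCast]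
      rw [bm_sum_Icc_eq_range 0 (m + 1) _ (fun k hk => by omega),
        bm_sum_Icc_eq_range 0 m _ (fun k hk => by omega)]
      have hs := bm_keySum0 m
      push_cast
      linear_combination (1 / (4 : ℝ) ^ (m + 1)) * hs
    · obtain ⟨jj, rfl⟩ : ∃ jj, j = jj + 1 := ⟨j - 1, by omega⟩
      rw [show ((jj + 1 : ℕ) : ℤ) - 1 = ((jj : ℕ) : ℤ) by push_cast; ring]
      have cB : 0 ≤ ((jj : ℕ) : ℤ) ∧ ((jj : ℕ) : ℤ) ≤ ((m : ℕ) : ℤ) := by omega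
      simp only [bmD, if_pos cA, if_pos cC, if_pos cB, Int.toNat_natCast]
      rw [bm_sum_Icc_eq_range (jj + 1) (m + 1) _
          (fun k hk => by simp [Nat.choose_eq_zero_of_lt hk]),
        bm_sum_Icc_eq_range jj m _
          (fun k hk => by simp [Nat.choose_eq_zero_of_lt hk]),
        bm_sum_Icc_eq_range (jj + 1) m _
          (fun k hk => by simp [Nat.choose_eq_zero_of_lt hk])]
      have hs := bm_keySum1 m jj
      push_cast
      push_cast at hs
      linear_combination (1 / (4 : ℝ) ^ (m + 1)) * hs
  · -- boundary case j = m + 1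
    have hje : j = m + 1 := by omega
    subst hje
    have cA : 0 ≤ ((m + 1 : ℕ) : ℤ) ∧ ((m + 1 : ℕ) : ℤ) ≤ ((m + 1 : ℕ) : ℤ) := by omega
    have cC : ¬ (0 ≤ ((m + 1 : ℕ) : ℤ) ∧ ((m + 1 : ℕ) : ℤ) ≤ ((m : ℕ) : ℤ)) := by omega
    rw [show ((m + 1 : ℕ) : ℤ) - 1 = ((m : ℕ) : ℤ) by push_cast; ring]
    have cB : 0 ≤ ((m : ℕ) : ℤ) ∧ ((m : ℕ) : ℤ) ≤ ((m : ℕ) : ℤ) := by omega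
    simp only [bmD, if_pos cA, if_pos cB, if_neg cC, Int.toNat_natCast]
    rw [Finset.Icc_self, Finset.sum_singleton, Finset.Icc_self, Finset.sum_singleton]
    rw [show 2 * (m + 1) - 2 * (m + 1) = 0 by omega, show m + 1 - (m + 1) = 0 by omega,
      show m + 1 + (m + 1) = 2 * m + 2 by omega, show 2 * m - 2 * m = 0 by omega,
      show m - m = 0 by omega, show m + m = 2 * m by omega,
      Nat.choose_self, Nat.choose_self, Nat.choose_self]
    have h1' := bm_rL1 m
    push_cast
    linear_combination (2 * (2 : ℝ) ^ (m + 1) / (4 : ℝ) ^ (m + 1)) * h1'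
end

section
/- Define c_i(m) = 2^m m! d_{m-i}(m). Then the numbers c_i(m) satisfy c_i(m+1) = (4m - 2i + 2) c_i(m) + (6m - 2i + 5) c_{i-1}(m), with initial conditions c_0(0) = 1 and c_i(0) = 0 for i ≠ 0. -/
open Finset

/-- `c_i(m) = 2^m m! d_{m-i}(m)`, extended by `0` outside `0 ≤ i ≤ m`. -/
noncomputable def bmC (m : ℕ) (i : ℤ) : ℝ :=
  if 0 ≤ i ∧ i ≤ (m : ℤ) then (2 : ℝ) ^ m * (Nat.factorial m) * bmD m ((m : ℤ) - i) else 0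

/-!
Write `P_m(x) = ∑_k a_k(m) (x+1)^k` with `a_k(m) = 2^(k-2m) C(2m-2k, m-k) C(m+k, k)`. These
coefficients satisfy the hypergeometric relation
`2(m+1) a_{k+1}(m+1) = (2m-2k-1) a_{k+1}(m) + 2(m+k+1) a_k(m)`
(equivalently `2(m+1) P_{m+1} = (4m+3+2(m+1)x) P_m + 2x(x+1) P_m'`). Expanding `(x+1)^k` with
Pascal's rule and the absorption identity `(k+1-i) C(k, i-1) = i C(k, i)` turns it into
`2(m+1) d_i(m+1) = (4m+2i+3) d_i(m) + 2(m+i) d_{i-1}(m)`, which is the recurrence for `c_i` after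
the substitution `i ↦ m+1-i` and scaling by `2^m m!`.
-/

/-- `bmCoeff m k` is `a_k(m)`. The guard matters: for `k > m` the truncated subtractions would
give `C(2m-2k, m-k) = C(0, 0) = 1`. -/
noncomputable def bmCoeff (m k : ℕ) : ℝ :=
  if k ≤ m then 2 ^ k * (m - k).centralBinom * (m + k).choose k / 4 ^ m else 0

lemma bmCoeff_of_lt {m k : ℕ} (h : m < k) : bmCoeff m k = 0 :=
  if_neg (Nat.not_le.mpr h)

lemma centralBinom_succ_eq_div (n : ℕ) :
    ((n + 1).centralBinom : ℝ) = 2 * (2 * n + 1) * n.centralBinom / (n + 1) := by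
  rw [eq_div_iff (by positivity)]
  exact_mod_cast (mul_comm _ _).trans (Nat.succ_mul_centralBinom_succ n)

lemma choose_succ_succ_eq_div (n k : ℕ) :
    ((n + 1).choose (k + 1) : ℝ) = (n + 1) * n.choose k / (k + 1) := by
  rw [eq_div_iff (by positivity)]
  exact_mod_cast (Nat.add_one_mul_choose_eq n k).symm

lemma choose_succ_left_eq_div (a k : ℕ) :
    ((a + k + 1).choose k : ℝ) = (a + k + 1) * (a + k).choose k / (a + 1) := by
  rw [eq_div_iff (by positivity)]
  have h := Nat.choose_mul_succ_eq (a + k) k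
  rw [show a + k + 1 - k = a + 1 by omega] at h
  rw [mul_comm ((a : ℝ) + k + 1)]
  exact_mod_cast h.symm

lemma bmCoeff_succ_zero (m : ℕ) :
    2 * ((m : ℝ) + 1) * bmCoeff (m + 1) 0 = (2 * m + 1) * bmCoeff m 0 := by
  simp only [bmCoeff, zero_le, if_true, Nat.sub_zero, add_zero, Nat.choose_zero_right,
    centralBinom_succ_eq_div]
  field_simp
  ring

lemma bmCoeff_succ_succ (m k : ℕ) :
    2 * ((m : ℝ) + 1) * bmCoeff (m + 1) (k + 1)
      = (2 * m - 2 * k - 1) * bmCoeff m (k + 1) + 2 * (m + k + 1) * bmCoeff m k := by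
  rcases lt_trichotomy k m with hkm | rfl | hmk
  · obtain ⟨n, hn⟩ : ∃ n, m = k + 1 + n := ⟨m - (k + 1), by omega⟩
    simp only [bmCoeff, if_pos (show k + 1 ≤ m from hkm), if_pos hkm.le,
      if_pos (Nat.succ_le_succ hkm.le), Nat.add_sub_add_right, show m - (k + 1) = n by omega,
      show m - k = n + 1 by omega]
    rw [Nat.add_right_comm m 1, choose_succ_left_eq_div m (k + 1), ← add_assoc,
      choose_succ_succ_eq_div, centralBinom_succ_eq_div, hn]
    push_cast
    field_simp
    ring
  · simp only [bmCoeff, le_refl, if_true, if_neg (Nat.not_succ_le_self k), Nat.sub_self,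
      Nat.centralBinom_zero, ← two_mul, ← Nat.centralBinom_eq_two_mul_choose,
      centralBinom_succ_eq_div]
    push_cast
    field_simp
    ring
  · rw [bmCoeff_of_lt (by omega), bmCoeff_of_lt hmk, bmCoeff_of_lt (by omega)]
    ring

lemma sum_range_bmCoeff_succ_mul (m : ℕ) (f : ℕ → ℝ) :
    2 * ((m : ℝ) + 1) * ∑ k ∈ range (m + 2), bmCoeff (m + 1) k * f k
      = ∑ k ∈ range (m + 2), bmCoeff m k * ((2 * m + 1 - 2 * k) * f k)
        + ∑ k ∈ range (m + 2), bmCoeff m k * (2 * (m + k + 1) * f (k + 1)) := by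
  have hbulk : ∑ k ∈ range (m + 1), 2 * ((m : ℝ) + 1) * (bmCoeff (m + 1) (k + 1) * f (k + 1))
      = ∑ k ∈ range (m + 1), bmCoeff m (k + 1) * ((2 * m + 1 - 2 * (k + 1 : ℕ)) * f (k + 1))
        + ∑ k ∈ range (m + 1), bmCoeff m k * (2 * (m + k + 1) * f (k + 1)) := by
    rw [← sum_add_distrib]
    refine sum_congr rfl fun k _ => ?_
    rw [← mul_assoc, bmCoeff_succ_succ]
    push_cast
    ring
  rw [mul_sum, sum_range_succ', sum_range_succ' (fun k => bmCoeff m k * (_ * f k)),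
    sum_range_succ (fun k => bmCoeff m k * (_ * f (k + 1))), bmCoeff_of_lt (lt_add_one m), hbulk,
    ← mul_assoc, bmCoeff_succ_zero, Nat.cast_zero, zero_mul, add_zero]
  ring

/-- `C(k, i)` extended by zero to negative `i`, so that Pascal's rule and absorption hold for
every `i : ℤ`. -/
noncomputable def intChoose (k : ℕ) (i : ℤ) : ℝ :=
  if 0 ≤ i then (k.choose i.toNat : ℝ) else 0

lemma intChoose_natCast (k n : ℕ) : intChoose k n = k.choose n := by
  simp [intChoose]

lemma intChoose_of_neg {i : ℤ} (k : ℕ) (hi : i < 0) : intChoose k i = 0 :=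
  if_neg (not_le.mpr hi)

lemma intChoose_succ (k : ℕ) (i : ℤ) :
    intChoose (k + 1) i = intChoose k i + intChoose k (i - 1) := by
  rcases lt_trichotomy i 0 with hi | rfl | hi
  · simp only [intChoose_of_neg _ hi, intChoose_of_neg _ (show i - 1 < 0 by omega), add_zero]
  · simp [intChoose]
  · obtain ⟨n, rfl⟩ : ∃ n : ℕ, i = (n + 1 : ℕ) := ⟨i.toNat - 1, by omega⟩
    rw [show ((n + 1 : ℕ) : ℤ) - 1 = n by omega, intChoose_natCast, intChoose_natCast,
      intChoose_natCast, Nat.choose_succ_succ', Nat.cast_add, add_comm]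

lemma add_one_sub_mul_intChoose_sub_one (k : ℕ) (i : ℤ) :
    ((k : ℝ) + 1 - i) * intChoose k (i - 1) = i * intChoose k i := by
  rcases lt_trichotomy i 0 with hi | rfl | hi
  · rw [intChoose_of_neg _ hi, intChoose_of_neg _ (show i - 1 < 0 by omega), mul_zero, mul_zero]
  · simp [intChoose]
  · obtain ⟨n, rfl⟩ : ∃ n : ℕ, i = (n + 1 : ℕ) := ⟨i.toNat - 1, by omega⟩
    rw [show ((n + 1 : ℕ) : ℤ) - 1 = n by omega, intChoose_natCast, intChoose_natCast]
    rcases le_or_gt n k with hnk | hkn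
    · have h := Nat.choose_succ_right_eq k n
      rw [← Nat.cast_inj (R := ℝ)] at h
      push_cast [hnk] at h ⊢
      linear_combination -h
    · rw [Nat.choose_eq_zero_of_lt hkn, Nat.choose_eq_zero_of_lt (by omega)]
      simp

lemma bmD_eq_sum (m N : ℕ) (hN : m < N) (i : ℤ) :
    bmD m i = ∑ k ∈ range N, bmCoeff m k * intChoose k i := by
  rcases lt_or_ge i 0 with hi | hi
  · rw [bmD, if_neg (by omega)]
    simp [intChoose_of_neg _ hi]
  obtain ⟨n, rfl⟩ := Int.eq_ofNat_of_zero_le hi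
  simp only [intChoose_natCast]
  have hsub : Icc n m ⊆ range N := fun k hk => by
    simp only [mem_Icc, mem_range] at hk ⊢
    omega
  rw [← sum_subset hsub fun k _ hk => ?_]
  · rw [bmD]
    split_ifs with h
    · rw [Int.toNat_natCast, mul_sum]
      refine sum_congr rfl fun k hk => ?_
      rw [mem_Icc] at hk
      rw [bmCoeff, if_pos hk.2, Nat.centralBinom_eq_two_mul_choose,
        show 2 * (m - k) = 2 * m - 2 * k by omega]
      ring
    · rw [Icc_eq_empty (by omega), sum_empty]
  · rw [mem_Icc, not_and_or, not_le, not_le] at hk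
    rcases hk with hk | hk
    · rw [Nat.choose_eq_zero_of_lt hk, Nat.cast_zero, mul_zero]
    · rw [bmCoeff_of_lt hk, zero_mul]

lemma bmD_succ (m : ℕ) (i : ℤ) :
    2 * ((m : ℝ) + 1) * bmD (m + 1) i
      = (4 * m + 3 + 2 * i) * bmD m i + 2 * (m + i) * bmD m (i - 1) := by
  rw [bmD_eq_sum (m + 1) (m + 2) (by omega), bmD_eq_sum m (m + 2) (by omega),
    bmD_eq_sum m (m + 2) (by omega), sum_range_bmCoeff_succ_mul, mul_sum, mul_sum,
    ← sum_add_distrib, ← sum_add_distrib]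
  refine sum_congr rfl fun k _ => ?_
  rw [intChoose_succ]
  linear_combination (2 * bmCoeff m k) * add_one_sub_mul_intChoose_sub_one k i

lemma bmC_eq (m : ℕ) (i : ℤ) : bmC m i = 2 ^ m * m.factorial * bmD m (m - i) := by
  rw [bmC]
  split_ifs with h
  · rfl
  · rw [bmD, if_neg (by omega), mul_zero]

theorem boros_moll_c_recurrence :
    (∀ (m : ℕ) (i : ℤ), 0 ≤ i → i ≤ (m : ℤ) + 1 →
      bmC (m + 1) i = (4 * (m : ℝ) - 2 * (i : ℝ) + 2) * bmC m i
        + (6 * (m : ℝ) - 2 * (i : ℝ) + 5) * bmC m (i - 1)) ∧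
    bmC 0 0 = 1 ∧ (∀ i : ℤ, i ≠ 0 → bmC 0 i = 0) := by
  refine ⟨fun m i _ _ => ?_, ?_, fun i hi => if_neg (by omega)⟩
  · have h := bmD_succ m (m + 1 - i)
    rw [show (m : ℤ) + 1 - i - 1 = m - i by ring] at h
    rw [bmC_eq, bmC_eq, bmC_eq, Nat.factorial_succ, show (m : ℤ) - (i - 1) = m + 1 - i by ring]
    push_cast at h ⊢
    linear_combination (2 ^ m * (m.factorial : ℝ)) * h
  · simp [bmC, bmD]
end

section
/- For the polynomial sequence Q_m defined by Q_0(x) = 1 and Q_{m+1}(x) = (2m+1)(2+3x) Q_m(x) − 2x(1+x) Q_m'(x), one has Q_m(1) = (m!/2^{m+1}) C(4m+2, 2m+1) for all m ≥ 0. -/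
open Polynomial

lemma bmQ_key (Q : ℕ → Polynomial ℝ) (h0 : Q 0 = 1)
    (hrec : ∀ m : ℕ, Q (m + 1) =
      (2 * (m : Polynomial ℝ) + 1) * (2 + 3 * Polynomial.X) * Q m
        - 2 * Polynomial.X * (1 + Polynomial.X) * Polynomial.derivative (Q m)) :
    ∀ m : ℕ, X ^ 2 * (X ^ 2 - 1) * Q (m + 1 + 1) =
      ((8 * (m : Polynomial ℝ) + 12) * X ^ 2 - (4 * (m : Polynomial ℝ) + 6)) *
          (X ^ 2 * (1 + X)) * Q (m + 1)
        - (4 * (m : Polynomial ℝ) + 3) * (4 * (m : Polynomial ℝ) + 5) *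
          (X ^ 2 * (1 + X)) ^ 2 * Q m := by
  intro m
  induction m with
  | zero =>
    have h1 : Q (0 + 1) = (2 * ((0 : ℕ) : Polynomial ℝ) + 1) * (2 + 3 * X) * Q 0
        - 2 * X * (1 + X) * derivative (Q 0) := hrec 0
    have h2 : Q (0 + 1 + 1) = (2 * (((0 + 1 : ℕ)) : Polynomial ℝ) + 1) * (2 + 3 * X) * Q (0 + 1)
        - 2 * X * (1 + X) * derivative (Q (0 + 1)) := hrec (0 + 1)
    rw [h2, h1, h0]
    simp only [derivative_mul, derivative_add, derivative_sub, derivative_one,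
      derivative_zero, derivative_X, derivative_ofNat, derivative_natCast, derivative_pow]
    push_cast
    ring
  | succ n ih =>
    rw [hrec (n + 1), hrec n] at ih
    have ih' := congrArg derivative ih
    rw [hrec (n + 1 + 1), hrec (n + 1), hrec n]
    simp only [derivative_mul, derivative_add, derivative_sub, derivative_one,
      derivative_zero, derivative_X, derivative_ofNat, derivative_natCast,
      derivative_pow, map_ofNat, Polynomial.C_eq_natCast] at ih ih' ⊢
    push_cast at ih' ih ⊢
    linear_combination (-(2 * X * (1 + X))) * ih' +
      ((2 * (n : Polynomial ℝ) + 5) * (2 + 3 * X)) * ih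

lemma bmQ_nat (m : ℕ) :
    (2 * m + 3) * ((m + 1) * Nat.centralBinom (2 * m + 3)) =
      2 * (4 * m + 3) * (4 * m + 5) * Nat.centralBinom (2 * m + 1) := by
  have h1 := Nat.succ_mul_centralBinom_succ (2 * m + 1)
  have h2 := Nat.succ_mul_centralBinom_succ (2 * m + 2)
  have e1 : 2 * m + 1 + 1 = 2 * m + 2 := by omega
  have e2 : 2 * m + 2 + 1 = 2 * m + 3 := by omega
  rw [e1] at h1
  rw [e2] at h2
  calc (2 * m + 3) * ((m + 1) * Nat.centralBinom (2 * m + 3))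
      = (m + 1) * ((2 * m + 3) * Nat.centralBinom (2 * m + 3)) := by ring
    _ = (m + 1) * (2 * (2 * (2 * m + 2) + 1) * Nat.centralBinom (2 * m + 2)) := by rw [h2]
    _ = (2 * (2 * m + 2) + 1) * ((2 * m + 2) * Nat.centralBinom (2 * m + 2)) := by ring
    _ = (2 * (2 * m + 2) + 1) * (2 * (2 * (2 * m + 1) + 1) * Nat.centralBinom (2 * m + 1)) := by
        rw [h1]
    _ = 2 * (4 * m + 3) * (4 * m + 5) * Nat.centralBinom (2 * m + 1) := by ring

lemma bmQ_aux (Q : ℕ → Polynomial ℝ) (h0 : Q 0 = 1)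
    (hrec : ∀ m : ℕ, Q (m + 1) =
      (2 * (m : Polynomial ℝ) + 1) * (2 + 3 * Polynomial.X) * Q m
        - 2 * Polynomial.X * (1 + Polynomial.X) * Polynomial.derivative (Q m)) :
    ∀ m : ℕ, (Q m).eval 1 * 2 ^ (m + 1) =
      (Nat.factorial m : ℝ) * ((4 * m + 2).choose (2 * m + 1) : ℝ) := by
  intro m
  induction m with
  | zero =>
    rw [h0]
    norm_num
  | succ n ih =>
    have key := bmQ_key Q h0 hrec n
    have e0 := congrArg (Polynomial.eval (1 : ℝ)) key
    simp only [eval_mul, eval_add, eval_sub, eval_pow, eval_X, eval_one, eval_ofNat,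
      eval_natCast] at e0
    norm_num at e0
    -- e0 should relate eval (Q (n+1)) and eval (Q n)
    have e : (8 * (n : ℝ) + 12) * (Q (n + 1)).eval 1
        = 4 * (4 * (n : ℝ) + 3) * (4 * (n : ℝ) + 5) * (Q n).eval 1 := by
      linear_combination -e0
    have hnat := bmQ_nat n
    have hcb1 : Nat.centralBinom (2 * n + 1) = (4 * n + 2).choose (2 * n + 1) := by
      unfold Nat.centralBinom
      congr 1
      omega
    have hcb3 : Nat.centralBinom (2 * n + 3) = (4 * n + 6).choose (2 * n + 3) := by
      unfold Nat.centralBinom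
      congr 1
      omega
    rw [hcb1, hcb3] at hnat
    have hn : (2 * (n : ℝ) + 3) * (((n : ℝ) + 1) * ((4 * n + 6).choose (2 * n + 3) : ℝ))
        = 2 * (4 * (n : ℝ) + 3) * (4 * (n : ℝ) + 5) * ((4 * n + 2).choose (2 * n + 1) : ℝ) := by
      exact_mod_cast congrArg (Nat.cast : ℕ → ℝ) hnat
    have i1 : 4 * (n + 1) + 2 = 4 * n + 6 := by ring
    have i2 : 2 * (n + 1) + 1 = 2 * n + 3 := by ring
    rw [i1, i2]
    have h23 : (2 * (n : ℝ) + 3) ≠ 0 := by positivity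
    refine mul_left_cancel₀ h23 ?_
    push_cast [Nat.factorial_succ, pow_succ]
    linear_combination ((2 : ℝ) ^ (n + 1)) / 2 * e +
      (2 * (4 * (n : ℝ) + 3) * (4 * (n : ℝ) + 5)) * ih - ((Nat.factorial n : ℝ)) * hn

theorem bmQ_eval_one (Q : ℕ → Polynomial ℝ) (h0 : Q 0 = 1)
    (hrec : ∀ m : ℕ, Q (m + 1) =
      (2 * (m : Polynomial ℝ) + 1) * (2 + 3 * Polynomial.X) * Q m
        - 2 * Polynomial.X * (1 + Polynomial.X) * Polynomial.derivative (Q m)) :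
    ∀ m : ℕ, (Q m).eval 1 =
      ((Nat.factorial m : ℝ) / 2 ^ (m + 1)) * ((4 * m + 2).choose (2 * m + 1) : ℝ) := by
  intro m
  have h := bmQ_aux Q h0 hrec m
  have h2 : (2 : ℝ) ^ (m + 1) ≠ 0 := by positivity
  field_simp
  linear_combination h
end

section
/- Let (a_m(x), b_m(x)) be the symmetric decomposition of Q_m(x), so that Q_m(x) = a_m(x) + x b_m(x), where a_m(x) = (Q_m(x) − x^{m+1} Q_m(1/x))/(1−x) and b_m(x) = (Q_m(x) − x^m Q_m(1/x))/(x−1). Then for all m ≥ 0: (1−x) a_{m+1}(x) = −2(1+x)(mx − 2m + x − 1) a_m(x) − 2x(1+x)^2 a_m'(x) + x(4mx − x − 3) b_m(x) − 4x^2(1+x) b_m'(x). -/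
open Polynomial

/-!
Since `deg Q_m ≤ m`, the reversal `P_m = X^m Q_m(1/X)` obeys its own recurrence
`P_{m+1} = (2m+1)(3+2X) P_m - 2(1+X)(m P_m - X P_m')`, because reversal in degree `N` turns
`X · d/dX` into `N - X · d/dX`. After multiplying the claim by `(1 - X)^2`, the polynomials
`a_m`, `b_m` and their derivatives are expressed through `Q_m`, `P_m` and their derivatives,
and the claim becomes a polynomial identity.
-/

namespace Polynomial
variable {R : Type*} [CommRing R]

theorem coeff_X_mul_derivative (f : R[X]) (n : ℕ) :
    (X * derivative f).coeff n = n * f.coeff n := by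
  cases n with
  | zero => simp
  | succ n => rw [coeff_X_mul, coeff_derivative]; push_cast; ring

theorem natDegree_X_mul_derivative_le (f : R[X]) :
    (X * derivative f).natDegree ≤ f.natDegree :=
  natDegree_le_iff_coeff_eq_zero.2 fun n hn => by
    rw [coeff_X_mul_derivative, coeff_eq_zero_of_natDegree_lt (by exact_mod_cast hn), mul_zero]

theorem reflect_X_mul_derivative {N : ℕ} {f : R[X]} (hf : f.natDegree ≤ N) :
    reflect N (X * derivative f) = (N : R[X]) * reflect N f - X * derivative (reflect N f) := by
  ext k
  rw [coeff_reflect, coeff_X_mul_derivative, coeff_sub, coeff_natCast_mul, coeff_X_mul_derivative,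
    coeff_reflect]
  rcases le_or_gt k N with hk | hk
  · rw [revAt_le hk, Nat.cast_sub hk]; ring
  · rw [revAt_eq_self_of_lt hk, coeff_eq_zero_of_natDegree_lt (hf.trans_lt hk)]; ring

theorem reflect_one_linear (a b : R) : reflect 1 (C a * X + C b) = C b * X + C a := by
  rw [reflect_add, reflect_C, ← pow_one (X : R[X]), reflect_C_mul_X_pow, revAt_le le_rfl]
  simp [add_comm]

theorem reflect_linear_mul {N : ℕ} {q : R[X]} (hq : q.natDegree ≤ N) (a b : R) :
    reflect (N + 1) ((C a * X + C b) * q) = (C b * X + C a) * reflect N q := by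
  rw [add_comm N, reflect_mul _ _ natDegree_linear_le hq, reflect_one_linear]

end Polynomial

section
variable {R : Type*} [CommRing R]

noncomputable def recurrenceStep (m : ℕ) (q : R[X]) : R[X] :=
  (2 * (m : R[X]) + 1) * (2 + 3 * X) * q - 2 * X * (1 + X) * derivative q

-- the shape on which `reflect_linear_mul` and `reflect_X_mul_derivative` act
theorem recurrenceStep_eq_C_mul (m : ℕ) (q : R[X]) :
    recurrenceStep m q = C (2 * m + 1 : R) * ((C 3 * X + C 2) * q)
      - C 2 * ((C 1 * X + C 1) * (X * derivative q)) := by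
  simp only [recurrenceStep, map_add, map_mul, map_natCast, map_ofNat, map_one]; ring

theorem natDegree_recurrenceStep_le {m : ℕ} {q : R[X]} (hq : q.natDegree ≤ m) :
    (recurrenceStep m q).natDegree ≤ m + 1 := by
  have hlin (a b : R) {p : R[X]} (hp : p.natDegree ≤ m) :
      ((C a * X + C b) * p).natDegree ≤ m + 1 :=
    natDegree_mul_le.trans (by linarith [natDegree_linear_le (a := a) (b := b)])
  rw [recurrenceStep_eq_C_mul]
  exact (natDegree_sub_le _ _).trans <| max_le
    ((natDegree_C_mul_le _ _).trans (hlin _ _ hq))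
    ((natDegree_C_mul_le _ _).trans (hlin _ _ ((natDegree_X_mul_derivative_le q).trans hq)))

theorem reflect_recurrenceStep {m : ℕ} {q : R[X]} (hq : q.natDegree ≤ m) :
    reflect (m + 1) (recurrenceStep m q) =
      (2 * (m : R[X]) + 1) * (3 + 2 * X) * reflect m q
        - 2 * (1 + X) * ((m : R[X]) * reflect m q - X * derivative (reflect m q)) := by
  rw [recurrenceStep_eq_C_mul, reflect_sub, reflect_C_mul, reflect_C_mul, reflect_linear_mul hq,
    reflect_linear_mul ((natDegree_X_mul_derivative_le q).trans hq), reflect_X_mul_derivative hq]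
  simp only [map_add, map_mul, map_natCast, map_ofNat, map_one]; ring

end

theorem a_recurrence (Q a b : ℕ → Polynomial ℝ) (h0 : Q 0 = 1)
    (hrec : ∀ m : ℕ, Q (m + 1) =
      (2 * (m : Polynomial ℝ) + 1) * (2 + 3 * Polynomial.X) * Q m
        - 2 * Polynomial.X * (1 + Polynomial.X) * Polynomial.derivative (Q m))
    (ha : ∀ m : ℕ, (1 - Polynomial.X) * a m = Q m - Polynomial.X * Polynomial.reflect m (Q m))
    (hb : ∀ m : ℕ, (Polynomial.X - 1) * b m = Q m - Polynomial.reflect m (Q m)) :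
    ∀ m : ℕ, (1 - Polynomial.X) * a (m + 1) =
      -2 * (1 + Polynomial.X) *
          ((m : Polynomial ℝ) * Polynomial.X - 2 * (m : Polynomial ℝ) + Polynomial.X - 1) * a m
        - 2 * Polynomial.X * (1 + Polynomial.X) ^ 2 * Polynomial.derivative (a m)
        + Polynomial.X * (4 * (m : Polynomial ℝ) * Polynomial.X - Polynomial.X - 3) * b m
        - 4 * Polynomial.X ^ 2 * (1 + Polynomial.X) * Polynomial.derivative (b m) := by
  have hdeg (n : ℕ) : (Q n).natDegree ≤ n := by
    induction n with
    | zero => simp [h0]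
    | succ n ih => rw [hrec n]; exact natDegree_recurrenceStep_le ih
  intro m
  set P := reflect m (Q m)
  have hP : reflect (m + 1) (Q (m + 1)) = (2 * (m : ℝ[X]) + 1) * (3 + 2 * X) * P
      - 2 * (1 + X) * ((m : ℝ[X]) * P - X * derivative P) := by
    rw [hrec m]; exact reflect_recurrenceStep (hdeg m)
  have ha' : (1 - X) ^ 2 * derivative (a m) =
      (1 - X) * (derivative (Q m) - P - X * derivative P) + (Q m - X * P) := by
    have hder := congrArg derivative (ha m)
    simp only [derivative_mul, derivative_sub, derivative_one, derivative_X] at hder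
    linear_combination (1 - X) * hder + ha m
  have hb' : (1 - X) ^ 2 * derivative (b m) =
      (1 - X) * (derivative P - derivative (Q m)) + (P - Q m) := by
    have hder := congrArg derivative (hb m)
    simp only [derivative_mul, derivative_sub, derivative_one, derivative_X] at hder
    linear_combination -(1 - X) * hder - hb m
  have h1X : (1 - X : ℝ[X]) ≠ 0 := by
    rw [← neg_sub, neg_ne_zero, ← C_1]; exact X_sub_C_ne_zero 1
  refine mul_left_cancel₀ (pow_ne_zero 2 h1X) ?_
  linear_combination (1 - X) ^ 2 * (ha (m + 1) + hrec m - X * hP)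
    + 2 * (1 + X) * ((m : ℝ[X]) * X - 2 * m + X - 1) * (1 - X) * ha m + 2 * X * (1 + X) ^ 2 * ha'
    + X * (4 * (m : ℝ[X]) * X - X - 3) * (1 - X) * hb m + 4 * X ^ 2 * (1 + X) * hb'
end

section
/- With Q̃_m(x) = x^m Q_m(1/x) the reversal of Q_m, one has Q̃_{m+1}(x) = (2mx + 4m + 2x + 3) Q̃_m(x) + 2x(1+x) Q̃_m'(x) for all m ≥ 0. -/
open Polynomial

lemma refl_deriv (m : ℕ) (p : ℝ[X]) (hp : p.natDegree ≤ m) :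
    reflect (m-1) (derivative p) =
      C (m:ℝ) * reflect m p - X * derivative (reflect m p) := by
  have hz : ∀ j, m < j → p.coeff j = 0 := fun j hj =>
    coeff_eq_zero_of_natDegree_lt (lt_of_le_of_lt hp hj)
  ext i
  simp only [coeff_reflect, coeff_sub, coeff_C_mul, coeff_derivative]
  rcases i with _ | i
  · rw [mul_coeff_zero, coeff_X_zero, zero_mul, sub_zero]
    rcases Nat.eq_zero_or_pos m with hm | hm
    · subst hm; simp [hz 1 (by norm_num)]
    · rw [revAt_le (Nat.zero_le _), Nat.sub_zero, revAt_le (Nat.zero_le _), Nat.sub_zero,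
        Nat.sub_add_cancel hm]
      push_cast [Nat.cast_sub hm]
      ring
  · rw [coeff_X_mul, coeff_derivative, coeff_reflect]
    rcases le_or_gt (i+1) (m-1) with h | h
    · have h1 : i + 1 ≤ m := le_trans h (Nat.sub_le _ _)
      have h2 : i + 2 ≤ m := by omega
      rw [revAt_le h, revAt_le h1]
      have e2 : ((m - 1 - (i+1) : ℕ) : ℝ) = (m:ℝ) - (i+2) := by
        have e3 : m - 1 - (i+1) = m - (i+2) := by omega
        rw [e3, Nat.cast_sub h2]; push_cast; ring
      have e4 : m - 1 - (i+1) + 1 = m - (i+1) := by omega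
      rw [e4, e2]; ring
    · rcases le_or_gt (i+1) m with h1 | h1
      · have hm : i + 1 = m := by omega
        rw [revAt_eq_self_of_lt h, revAt_le h1, hm, Nat.sub_self]
        rw [hz (m+1) (by omega), ← hm]
        push_cast; ring
      · rw [revAt_eq_self_of_lt h, revAt_eq_self_of_lt h1]
        rw [hz (i+1+1) (by omega), hz (i+1) h1]
        ring

lemma refl1 : reflect 1 ((2:ℝ[X]) + 3*X) = 3 + 2*X := by
  have h : (2:ℝ[X]) + 3*X = C 2 * X^0 + C 3 * X^1 := by simp [map_ofNat]
  rw [h, reflect_add, reflect_C_mul, reflect_C_mul, reflect_monomial, reflect_monomial]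
  norm_num [revAt_le, map_ofNat]
  ring

lemma refl2 : reflect 2 (2*X*((1:ℝ[X])+X)) = 2*(1+X) := by
  have h : 2*X*((1:ℝ[X])+X) = C 2 * X^1 + C 2 * X^2 := by simp [map_ofNat]; ring
  rw [h, reflect_add, reflect_C_mul, reflect_C_mul, reflect_monomial, reflect_monomial]
  norm_num [revAt_le, map_ofNat]
  ring

theorem reflect_Q_recurrence (Q : ℕ → Polynomial ℝ) (h0 : Q 0 = 1)
    (hrec : ∀ m : ℕ, Q (m + 1) =
      (2 * (m : Polynomial ℝ) + 1) * (2 + 3 * Polynomial.X) * Q m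
        - 2 * Polynomial.X * (1 + Polynomial.X) * Polynomial.derivative (Q m)) :
    ∀ m : ℕ, Polynomial.reflect (m + 1) (Q (m + 1)) =
      (2 * (m : Polynomial ℝ) * Polynomial.X + 4 * (m : Polynomial ℝ) + 2 * Polynomial.X + 3) *
          Polynomial.reflect m (Q m)
        + 2 * Polynomial.X * (1 + Polynomial.X) *
            Polynomial.derivative (Polynomial.reflect m (Q m)) := by
  have hA : ∀ m : ℕ, ((2 * (m : ℝ[X]) + 1) * (2 + 3*X)).natDegree ≤ 1 := by
    intro m; compute_degree
  have hB : ((2 : ℝ[X]) * X * (1 + X)).natDegree ≤ 2 := by compute_degree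
  have hdeg : ∀ m, (Q m).natDegree ≤ m := by
    intro m
    induction m with
    | zero => rw [h0]; simp
    | succ n ih =>
      rw [hrec n]
      refine le_trans (natDegree_sub_le _ _) (max_le ?_ ?_)
      · refine le_trans (natDegree_mul_le) ?_
        have := hA n; omega
      · rcases Nat.eq_zero_or_pos n with hn | hn
        · subst hn; rw [h0]; simp
        · refine le_trans (natDegree_mul_le) ?_
          have := le_trans (natDegree_derivative_le (Q n)) (Nat.sub_le_sub_right ih 1)
          omega
  intro m
  set R := reflect m (Q m) with hR
  rw [hrec m, reflect_sub]
  have h1 : reflect (m+1) ((2 * (m : ℝ[X]) + 1) * (2 + 3*X) * Q m)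
      = C (2*(m:ℝ)+1) * (3 + 2*X) * R := by
    have hc : (2 * (m : ℝ[X]) + 1) * (2 + 3*X) = C (2*(m:ℝ)+1) * (2 + 3*X) := by
      simp only [map_add, map_mul, map_one, map_ofNat, map_natCast]
    rw [show m + 1 = 1 + m from by omega, hc, reflect_mul _ _ (by compute_degree) (hdeg m),
      reflect_C_mul, refl1]
  have h2 : reflect (m+1) (2 * X * (1 + X) * derivative (Q m))
      = 2*(1+X) * reflect (m-1) (derivative (Q m)) := by
    rcases Nat.eq_zero_or_pos m with hm | hm
    · subst hm; rw [h0]; simp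
    · have hd : (derivative (Q m)).natDegree ≤ m - 1 :=
        le_trans (natDegree_derivative_le (Q m)) (Nat.sub_le_sub_right (hdeg m) 1)
      rw [show m + 1 = 2 + (m - 1) from by omega, reflect_mul _ _ hB hd, refl2]
  rw [h1, h2, refl_deriv m (Q m) (hdeg m), ← hR]
  simp only [map_add, map_mul, map_one, map_ofNat, map_natCast]
  ring
end

section
/- Let α_{m,k} and β_{m,k} be the γ-coefficients of a_m and b_m, i.e. a_m(x) = ∑_{k=0}^{⌊m/2⌋} α_{m,k} x^k (1+x)^{m−2k} and b_m(x) = ∑_{k=0}^{⌊(m−1)/2⌋} β_{m,k} x^k (1+x)^{m−1−2k}. Then for all m ≥ 1 and all admissible k: α_{m+1,k} = 2(2m+1−k) α_{m,k} − (4k−1) β_{m,k−1} (with β_{m,−1} = 0 and α_{m,k} = 0 for k > ⌊m/2⌋), and β_{m+1,k} = (1+4k) α_{m,k} + (4m+2k+3) β_{m,k} (with β_{m,k} = 0 for k > ⌊(m−1)/2⌋). -/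
/-
Write L_m p = (2m+1)(2+3X) p - 2X(1+X) p' (`stepOperator m`), so that Q_{m+1} = L_m Q_m.
Since 2 + 3X = 2(1+X) + X, L_m sends X^k (1+X)^j to
2(2m+1-k) X^k (1+X)^(j+1) + (2m+1-2j) X^(k+1) (1+X)^j. Applying this to Q_m = a_m + X b_m and
regrouping writes Q_{m+1} = A + X B, with A and B γ-sums of degrees m+1 and m whose coefficients
are the claimed ones. Both are palindromic, so reflecting Q_{m+1} identifies A = a_{m+1} and
B = b_{m+1}. Finally, γ-coefficients are unique: evaluating at 0 recovers the first one, and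
after it vanishes the γ-sum of degree n+2 is X times one of degree n.
-/

open Polynomial Finset

lemma sum_range_eq_sum_range_of_le {M : Type*} [AddCommMonoid M] {N N' : ℕ} (h : N ≤ N')
    {f : ℕ → M} (hf : ∀ k, N ≤ k → f k = 0) : ∑ k ∈ range N, f k = ∑ k ∈ range N', f k :=
  sum_subset (range_subset_range.mpr h) fun k _ hk => hf k (by simpa using hk)

section

variable {R : Type*} [CommRing R]

lemma reflect_one_add_X_pow (n : ℕ) : reflect n ((1 + X : R[X]) ^ n) = (1 + X) ^ n := by
  ext i
  rw [coeff_reflect, coeff_one_add_X_pow, coeff_one_add_X_pow]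
  rcases le_or_gt i n with hi | hi
  · rw [revAt_le hi, Nat.choose_symm hi]
  · rw [revAt_eq_self_of_lt hi]

lemma reflect_finset_sum {ι : Type*} (N : ℕ) (s : Finset ι) (f : ι → R[X]) :
    reflect N (∑ i ∈ s, f i) = ∑ i ∈ s, reflect N (f i) :=
  map_sum (AddMonoidHom.mk' (reflect N) fun f g => reflect_add f g N) f s

noncomputable def gammaSum (n : ℕ) (c : ℕ → R) : R[X] :=
  ∑ k ∈ range (n / 2 + 1), C (c k) * X ^ k * (1 + X) ^ (n - 2 * k)

lemma reflect_gammaSum (n : ℕ) (c : ℕ → R) : reflect n (gammaSum n c) = gammaSum n c := by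
  rw [gammaSum, reflect_finset_sum]
  refine sum_congr rfl fun k hk => ?_
  have hk : 2 * k ≤ n := by have := mem_range.mp hk; omega
  obtain ⟨j, rfl⟩ := Nat.exists_eq_add_of_le hk
  have hXk : (X ^ k : R[X]).natDegree ≤ 2 * k := (natDegree_X_pow_le k).trans (by omega)
  have hv : ((1 + X : R[X]) ^ j).natDegree ≤ j := by compute_degree
  rw [Nat.add_sub_cancel_left, mul_assoc, reflect_C_mul, reflect_mul _ _ hXk hv, reflect_monomial,
    reflect_one_add_X_pow, revAt_le (by omega), two_mul, Nat.add_sub_cancel]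

lemma natDegree_gammaSum_le (n : ℕ) (c : ℕ → R) : (gammaSum n c).natDegree ≤ n := by
  refine natDegree_sum_le_of_forall_le _ _ fun k hk => ?_
  have hk : 2 * k ≤ n := by have := mem_range.mp hk; omega
  refine (?_ : _ ≤ k + (n - 2 * k)).trans (by omega)
  compute_degree

lemma eval_zero_gammaSum (n : ℕ) (c : ℕ → R) : (gammaSum n c).eval 0 = c 0 := by
  rw [gammaSum, eval_finsetSum, sum_range_succ']
  simp

lemma gammaSum_add_two (n : ℕ) (c : ℕ → R) :
    gammaSum (n + 2) c = C (c 0) * (1 + X) ^ (n + 2) + X * gammaSum n (fun k => c (k + 1)) := by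
  rw [gammaSum, show (n + 2) / 2 + 1 = n / 2 + 1 + 1 by omega, sum_range_succ', gammaSum, mul_sum,
    add_comm]
  congr 1
  · simp
  · refine sum_congr rfl fun k _ => ?_
    rw [show n + 2 - 2 * (k + 1) = n - 2 * k by omega]
    ring

lemma gammaSum_sub (n : ℕ) (c d : ℕ → R) : gammaSum n (c - d) = gammaSum n c - gammaSum n d := by
  simp only [gammaSum, Pi.sub_apply, map_sub, sub_mul, sum_sub_distrib]

lemma eq_zero_of_gammaSum_eq_zero {n : ℕ} {c : ℕ → R} (h : gammaSum n c = 0) :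
    ∀ k ≤ n / 2, c k = 0 := by
  induction n using Nat.strong_induction_on generalizing c with
  | _ n ih =>
    have hc0 : c 0 = 0 := by simpa [eval_zero_gammaSum] using congrArg (eval 0) h
    rintro (_ | k) hk
    · exact hc0
    obtain ⟨n, rfl⟩ : ∃ n', n = n' + 2 := ⟨n - 2, by omega⟩
    rw [gammaSum_add_two, hc0, map_zero, zero_mul, zero_add] at h
    exact ih n (by omega) (isRegular_X.left (h.trans (mul_zero X).symm)) k (by omega)

lemma eq_of_gammaSum_eq {n : ℕ} {c d : ℕ → R} (h : gammaSum n c = gammaSum n d)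
    (hc : ∀ k, n / 2 < k → c k = 0) (hd : ∀ k, n / 2 < k → d k = 0) : c = d := by
  funext k
  rcases le_or_gt k (n / 2) with hk | hk
  · exact sub_eq_zero.mp <|
      eq_zero_of_gammaSum_eq_zero (c := c - d) (by rw [gammaSum_sub, h, sub_self]) k hk
  · rw [hc k hk, hd k hk]

noncomputable def stepOperator (m : ℕ) : R[X] →ₗ[R] R[X] :=
  LinearMap.mulLeft R ((2 * (m : R[X]) + 1) * (2 + 3 * X)) -
    LinearMap.mulLeft R (2 * X * (1 + X)) ∘ₗ derivative

lemma stepOperator_apply (m : ℕ) (p : R[X]) :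
    stepOperator m p = (2 * (m : R[X]) + 1) * (2 + 3 * X) * p - 2 * X * (1 + X) * derivative p :=
  rfl

lemma stepOperator_C_mul (m : ℕ) (a : R) (p : R[X]) :
    stepOperator m (C a * p) = C a * stepOperator m p := by
  rw [← smul_eq_C_mul, map_smul, smul_eq_C_mul]

lemma X_mul_derivative_X_pow (k : ℕ) : X * derivative (X ^ k : R[X]) = (k : R[X]) * X ^ k := by
  rcases k with _ | k
  · simp
  · rw [derivative_X_pow, C_eq_natCast, Nat.add_sub_cancel, pow_succ]
    ring

lemma one_add_X_mul_derivative_one_add_X_pow (j : ℕ) :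
    (1 + X) * derivative ((1 + X : R[X]) ^ j) = (j : R[X]) * (1 + X) ^ j := by
  rcases j with _ | j
  · simp
  · rw [derivative_pow, C_eq_natCast, Nat.add_sub_cancel, pow_succ, derivative_add, derivative_one,
      derivative_X]
    ring

lemma stepOperator_X_pow_mul_one_add_X_pow (m k j : ℕ) :
    stepOperator m (X ^ k * (1 + X) ^ j : R[X]) =
      C (2 * (2 * m + 1 - k) : R) * X ^ k * (1 + X) ^ (j + 1) +
        C (2 * m + 1 - 2 * j : R) * X ^ (k + 1) * (1 + X) ^ j := by
  simp only [stepOperator_apply, derivative_mul, map_mul, map_sub, map_add, map_natCast, map_ofNat,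
    map_one]
  linear_combination (-2 * (1 + X) ^ (j + 1) : R[X]) * X_mul_derivative_X_pow (R := R) k -
    (2 * X ^ (k + 1) : R[X]) * one_add_X_mul_derivative_one_add_X_pow (R := R) j

lemma stepOperator_gammaTerm {m k : ℕ} (hk : 2 * k ≤ m) :
    stepOperator m (X ^ k * (1 + X) ^ (m - 2 * k) : R[X]) =
      C (2 * (2 * m + 1 - k) : R) * X ^ k * (1 + X) ^ (m + 1 - 2 * k) +
        C (4 * k + 1 : R) * X ^ (k + 1) * (1 + X) ^ (m - 2 * k) := by
  rw [stepOperator_X_pow_mul_one_add_X_pow, Nat.cast_sub hk,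
    show m - 2 * k + 1 = m + 1 - 2 * k by omega]
  simp only [map_sub, map_add, map_mul, map_natCast, map_ofNat, map_one, Nat.cast_mul,
    Nat.cast_ofNat]
  ring

lemma stepOperator_X_mul_gammaTerm {m k : ℕ} (hk : 2 * k + 1 ≤ m) :
    stepOperator m (X ^ (k + 1) * (1 + X) ^ (m - 1 - 2 * k) : R[X]) =
      C (4 * m + 2 * k + 3 : R) * X ^ (k + 1) * (1 + X) ^ (m - 2 * k) -
        C (4 * k + 3 : R) * X ^ (k + 1) * (1 + X) ^ (m - 1 - 2 * k) := by
  obtain ⟨j, rfl⟩ := Nat.exists_eq_add_of_le hk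
  rw [stepOperator_X_pow_mul_one_add_X_pow, show 2 * k + 1 + j - 1 - 2 * k = j by omega,
    show 2 * k + 1 + j - 2 * k = j + 1 by omega]
  simp only [map_sub, map_add, map_mul, map_natCast, map_ofNat, map_one, Nat.cast_add, Nat.cast_mul,
    Nat.cast_one, Nat.cast_ofNat]
  ring

lemma stepOperator_gammaSum (m : ℕ) (c : ℕ → R) :
    stepOperator m (gammaSum m c) =
      ∑ k ∈ range (m / 2 + 1), C (2 * (2 * m + 1 - k) * c k) * X ^ k * (1 + X) ^ (m + 1 - 2 * k) +
        X * gammaSum m (fun k => (4 * k + 1) * c k) := by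
  rw [gammaSum, gammaSum, map_sum, mul_sum, ← sum_add_distrib]
  refine sum_congr rfl fun k hk => ?_
  rw [mul_assoc, stepOperator_C_mul, stepOperator_gammaTerm (by have := mem_range.mp hk; omega)]
  simp only [map_mul]
  ring

lemma stepOperator_X_mul_gammaSum {m : ℕ} (hm : 1 ≤ m) (d : ℕ → R) :
    stepOperator m (X * gammaSum (m - 1) d) =
      X * ∑ k ∈ range ((m - 1) / 2 + 1),
          C ((4 * m + 2 * k + 3) * d k) * X ^ k * (1 + X) ^ (m - 2 * k) -
        ∑ k ∈ range ((m - 1) / 2 + 1),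
          C ((4 * k + 3) * d k) * X ^ (k + 1) * (1 + X) ^ (m - 1 - 2 * k) := by
  rw [gammaSum, mul_sum, mul_sum, map_sum, ← sum_sub_distrib]
  refine sum_congr rfl fun k hk => ?_
  rw [show X * (C (d k) * X ^ k * (1 + X) ^ (m - 1 - 2 * k)) =
      C (d k) * (X ^ (k + 1) * (1 + X) ^ (m - 1 - 2 * k)) by ring,
    stepOperator_C_mul, stepOperator_X_mul_gammaTerm (by have := mem_range.mp hk; omega)]
  simp only [map_mul]
  ring

/-- With `c`, `d` the γ-coefficients of `a_m`, `b_m`, these are those of `a_{m+1}`, `b_{m+1}`. -/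
def nextAlpha (m : ℕ) (c d : ℕ → R) : ℕ → R
  | 0 => 2 * (2 * m + 1) * c 0
  | k + 1 => 2 * (2 * m + 1 - (k + 1)) * c (k + 1) - (4 * (k + 1) - 1) * d k

def nextBeta (m : ℕ) (c d : ℕ → R) (k : ℕ) : R :=
  (1 + 4 * k) * c k + (4 * m + 2 * k + 3) * d k

lemma nextAlpha_eq_zero {m : ℕ} (hm : 1 ≤ m) {c d : ℕ → R} (hc : ∀ k, m / 2 < k → c k = 0)
    (hd : ∀ k, (m - 1) / 2 < k → d k = 0) : ∀ k, (m + 1) / 2 < k → nextAlpha m c d k = 0 := by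
  rintro (_ | k) hk
  · omega
  · simp [nextAlpha, hc _ (by omega : m / 2 < k + 1), hd _ (by omega : (m - 1) / 2 < k)]

lemma nextBeta_eq_zero {m : ℕ} {c d : ℕ → R} (hc : ∀ k, m / 2 < k → c k = 0)
    (hd : ∀ k, (m - 1) / 2 < k → d k = 0) : ∀ k, m / 2 < k → nextBeta m c d k = 0 := fun k hk => by
  simp [nextBeta, hc k hk, hd k (by omega)]

lemma gammaSum_nextAlpha {m : ℕ} (hm : 1 ≤ m) {c : ℕ → R} (hc : ∀ k, m / 2 < k → c k = 0)
    (d : ℕ → R) :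
    gammaSum (m + 1) (nextAlpha m c d) =
      ∑ k ∈ range (m / 2 + 1), C (2 * (2 * m + 1 - k) * c k) * X ^ k * (1 + X) ^ (m + 1 - 2 * k) -
        ∑ k ∈ range ((m - 1) / 2 + 1),
          C ((4 * k + 3) * d k) * X ^ (k + 1) * (1 + X) ^ (m - 1 - 2 * k) := by
  rw [sum_range_eq_sum_range_of_le (N' := (m - 1) / 2 + 1 + 1) (by omega)
      fun k hk => by simp [hc k (by omega)],
    sum_range_succ', gammaSum, show (m + 1) / 2 + 1 = (m - 1) / 2 + 1 + 1 by omega, sum_range_succ',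
    add_sub_right_comm, ← sum_sub_distrib]
  congr 1
  · refine sum_congr rfl fun k _ => ?_
    rw [show m + 1 - 2 * (k + 1) = m - 1 - 2 * k by omega]
    simp only [nextAlpha, map_sub, map_add, map_mul, map_one, map_natCast, map_ofNat, Nat.cast_add,
      Nat.cast_one]
    ring
  · simp [nextAlpha]

lemma gammaSum_nextBeta {m : ℕ} (c : ℕ → R) {d : ℕ → R} (hd : ∀ k, (m - 1) / 2 < k → d k = 0) :
    gammaSum m (nextBeta m c d) =
      gammaSum m (fun k => (4 * k + 1) * c k) +
        ∑ k ∈ range ((m - 1) / 2 + 1),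
          C ((4 * m + 2 * k + 3) * d k) * X ^ k * (1 + X) ^ (m - 2 * k) := by
  rw [sum_range_eq_sum_range_of_le (N' := m / 2 + 1) (by omega)
      fun k hk => by simp [hd k (by omega)],
    gammaSum, gammaSum, ← sum_add_distrib]
  refine sum_congr rfl fun k _ => ?_
  simp only [nextBeta, map_add, map_mul]
  ring

lemma stepOperator_gammaSum_add_X_mul_gammaSum {m : ℕ} (hm : 1 ≤ m) {c d : ℕ → R}
    (hc : ∀ k, m / 2 < k → c k = 0) (hd : ∀ k, (m - 1) / 2 < k → d k = 0) :
    stepOperator m (gammaSum m c + X * gammaSum (m - 1) d) =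
      gammaSum (m + 1) (nextAlpha m c d) + X * gammaSum m (nextBeta m c d) := by
  rw [map_add, stepOperator_gammaSum, stepOperator_X_mul_gammaSum hm, gammaSum_nextAlpha hm hc,
    gammaSum_nextBeta c hd]
  ring

lemma isRegular_X_sub_one : IsRegular (X - 1 : R[X]) := by
  simpa using (monic_X_sub_C (1 : R)).isRegular

lemma eq_add_X_mul_of_symmetric_decomposition {n : ℕ} {Q a b : R[X]}
    (ha : (1 - X) * a = Q - X * reflect n Q) (hb : (X - 1) * b = Q - reflect n Q) :
    Q = a + X * b :=
  isRegular_X_sub_one.left (by linear_combination ha - X * hb)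

lemma symmetric_decomposition_unique {n : ℕ} {Q a b A B : R[X]}
    (ha : (1 - X) * a = Q - X * reflect (n + 1) Q) (hb : (X - 1) * b = Q - reflect (n + 1) Q)
    (hQ : Q = A + X * B) (hA : reflect (n + 1) A = A) (hB : reflect n B = B)
    (hBdeg : B.natDegree ≤ n) : a = A ∧ b = B := by
  have hrefl : reflect (n + 1) Q = A + B := by
    rw [hQ, reflect_add, hA, add_comm n, reflect_mul _ _ natDegree_X_le hBdeg, reflect_one_X, hB,
      one_mul]
  rw [hrefl, hQ] at ha hb
  exact ⟨isRegular_X_sub_one.left (by linear_combination -ha),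
    isRegular_X_sub_one.left (by linear_combination hb)⟩

end

theorem gamma_coefficients_recurrence_general (Q a b : ℕ → Polynomial ℝ) (α β : ℕ → ℕ → ℝ)
    (hrec : ∀ m : ℕ, Q (m + 1) =
      (2 * (m : Polynomial ℝ) + 1) * (2 + 3 * Polynomial.X) * Q m
        - 2 * Polynomial.X * (1 + Polynomial.X) * Polynomial.derivative (Q m))
    (ha : ∀ m : ℕ, (1 - Polynomial.X) * a m = Q m - Polynomial.X * Polynomial.reflect m (Q m))
    (hb : ∀ m : ℕ, (Polynomial.X - 1) * b m = Q m - Polynomial.reflect m (Q m))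
    (haexp : ∀ m : ℕ, a m = ∑ k ∈ Finset.range (m / 2 + 1),
      Polynomial.C (α m k) * Polynomial.X ^ k * (1 + Polynomial.X) ^ (m - 2 * k))
    (hbexp : ∀ m : ℕ, b m = ∑ k ∈ Finset.range ((m - 1) / 2 + 1),
      Polynomial.C (β m k) * Polynomial.X ^ k * (1 + Polynomial.X) ^ (m - 1 - 2 * k))
    (hα0 : ∀ m k : ℕ, m / 2 < k → α m k = 0)
    (hβ0 : ∀ m k : ℕ, (m - 1) / 2 < k → β m k = 0) :
    ∀ m : ℕ, 1 ≤ m →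
      (α (m + 1) 0 = 2 * (2 * (m : ℝ) + 1) * α m 0) ∧
      (∀ k : ℕ, α (m + 1) (k + 1) =
        2 * (2 * (m : ℝ) + 1 - ((k : ℝ) + 1)) * α m (k + 1)
          - (4 * ((k : ℝ) + 1) - 1) * β m k) ∧
      (∀ k : ℕ, β (m + 1) k =
        (1 + 4 * (k : ℝ)) * α m k + (4 * (m : ℝ) + 2 * (k : ℝ) + 3) * β m k) := by
  intro m hm
  have hQ : Q m = gammaSum m (α m) + X * gammaSum (m - 1) (β m) := by
    rw [eq_add_X_mul_of_symmetric_decomposition (ha m) (hb m), haexp, hbexp]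
    rfl
  have hstep : Q (m + 1) =
      gammaSum (m + 1) (nextAlpha m (α m) (β m)) + X * gammaSum m (nextBeta m (α m) (β m)) := by
    rw [hrec, ← stepOperator_apply, hQ,
      stepOperator_gammaSum_add_X_mul_gammaSum hm (hα0 m) (hβ0 m)]
  obtain ⟨ha', hb'⟩ := symmetric_decomposition_unique (ha (m + 1)) (hb (m + 1)) hstep
    (reflect_gammaSum _ _) (reflect_gammaSum _ _) (natDegree_gammaSum_le _ _)
  have hbexp' := hbexp (m + 1)
  rw [Nat.add_sub_cancel] at hbexp'
  have hα : α (m + 1) = nextAlpha m (α m) (β m) :=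
    eq_of_gammaSum_eq ((haexp (m + 1)).symm.trans ha') (hα0 (m + 1))
      (nextAlpha_eq_zero hm (hα0 m) (hβ0 m))
  have hβ : β (m + 1) = nextBeta m (α m) (β m) :=
    eq_of_gammaSum_eq (hbexp'.symm.trans hb') (by simpa using hβ0 (m + 1))
      (nextBeta_eq_zero (hα0 m) (hβ0 m))
  exact ⟨congrFun hα 0, fun k => congrFun hα (k + 1), congrFun hβ⟩

theorem gamma_coefficients_recurrence (Q a b : ℕ → Polynomial ℝ) (α β : ℕ → ℕ → ℝ)
    (h0 : Q 0 = 1)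
    (hrec : ∀ m : ℕ, Q (m + 1) =
      (2 * (m : Polynomial ℝ) + 1) * (2 + 3 * Polynomial.X) * Q m
        - 2 * Polynomial.X * (1 + Polynomial.X) * Polynomial.derivative (Q m))
    (ha : ∀ m : ℕ, (1 - Polynomial.X) * a m = Q m - Polynomial.X * Polynomial.reflect m (Q m))
    (hb : ∀ m : ℕ, (Polynomial.X - 1) * b m = Q m - Polynomial.reflect m (Q m))
    (haexp : ∀ m : ℕ, a m = ∑ k ∈ Finset.range (m / 2 + 1),
      Polynomial.C (α m k) * Polynomial.X ^ k * (1 + Polynomial.X) ^ (m - 2 * k))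
    (hbexp : ∀ m : ℕ, b m = ∑ k ∈ Finset.range ((m - 1) / 2 + 1),
      Polynomial.C (β m k) * Polynomial.X ^ k * (1 + Polynomial.X) ^ (m - 1 - 2 * k))
    (hα0 : ∀ m k : ℕ, m / 2 < k → α m k = 0)
    (hβ0 : ∀ m k : ℕ, (m - 1) / 2 < k → β m k = 0) :
    ∀ m : ℕ, 1 ≤ m →
      (α (m + 1) 0 = 2 * (2 * (m : ℝ) + 1) * α m 0) ∧
      (∀ k : ℕ, α (m + 1) (k + 1) =
        2 * (2 * (m : ℝ) + 1 - ((k : ℝ) + 1)) * α m (k + 1)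
          - (4 * ((k : ℝ) + 1) - 1) * β m k) ∧
      (∀ k : ℕ, β (m + 1) k =
        (1 + 4 * (k : ℝ)) * α m k + (4 * (m : ℝ) + 2 * (k : ℝ) + 3) * β m k) :=
  gamma_coefficients_recurrence_general Q a b α β hrec ha hb haexp hbexp hα0 hβ0
end

section
/- Define α_m(x) = ∑_{k=0}^{⌊m/2⌋} (−1)^k α_{m,k} x^k and β_m(x) = ∑_{k=0}^{⌊(m−1)/2⌋} (−1)^k β_{m,k} x^k. Then these polynomials satisfy the recurrence system α_{m+1}(x) = (4m+2) α_m(x) − 2x α_m'(x) + 3x β_m(x) + 4x^2 β_m'(x) and β_{m+1}(x) = α_m(x) + 4x α_m'(x) + (4m+3) β_m(x) + 2x β_m'(x), with α_0(x) = 1 and β_0(x) = 0. -/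
open Polynomial Finset

private lemma indep1 : ∀ (K n : ℕ) (c : ℕ → ℝ),
    (∑ k ∈ Finset.range K, C (c k) * X ^ k * (1 + X) ^ (n - 2 * k)) = 0 →
    ∀ k < K, c k = 0 := by
  intro K
  induction K with
  | zero => intro n c _ k hk; exact absurd hk (Nat.not_lt_zero k)
  | succ K ih =>
    intro n c hsum k hk
    have hc0 : c 0 = 0 := by
      have h := congrArg (Polynomial.eval 0) hsum
      simp [Polynomial.eval_finset_sum, zero_pow_eq, Finset.sum_ite_eq'] at h
      exact h
    have hfac : ∑ k ∈ Finset.range K,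
        C (c (k + 1)) * X ^ k * (1 + X) ^ (n - 2 - 2 * k) = 0 := by
      rw [Finset.sum_range_succ'] at hsum
      have h0 : C (c 0) * X ^ 0 * (1 + X) ^ (n - 2 * 0) = 0 := by
        simp [hc0]
      rw [h0, add_zero] at hsum
      have hX : X * (∑ k ∈ Finset.range K,
          C (c (k + 1)) * X ^ k * (1 + X) ^ (n - 2 - 2 * k)) = 0 := by
        rw [Finset.mul_sum]
        rw [← hsum]
        refine Finset.sum_congr rfl fun j _ => ?_
        have he : n - 2 * (j + 1) = n - 2 - 2 * j := by omega
        rw [he]; ring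
      rcases mul_eq_zero.1 hX with h | h
      · exact absurd h X_ne_zero
      · exact h
    rcases k with _ | k
    · exact hc0
    · exact ih (n - 2) (fun j => c (j + 1)) hfac k (by omega)

private lemma reflect_sum (n : ℕ) (s : Finset ℕ) (f : ℕ → Polynomial ℝ) :
    reflect n (∑ i ∈ s, f i) = ∑ i ∈ s, reflect n (f i) := by
  classical
  induction s using Finset.cons_induction with
  | empty => simp [Polynomial.reflect_zero]
  | cons a s ha ih => rw [Finset.sum_cons, Finset.sum_cons, Polynomial.reflect_add, ih]

private lemma ndY (e : ℕ) : ((1 + X : Polynomial ℝ) ^ e).natDegree ≤ e := by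
  have h1 : ((1 + X : Polynomial ℝ)).natDegree ≤ 1 :=
    le_trans (natDegree_add_le _ _) (by simp)
  exact le_trans natDegree_pow_le (by simpa using Nat.mul_le_mul_left e h1)

private lemma refl_pow (e : ℕ) : reflect e ((1 + X : Polynomial ℝ) ^ e) = (1 + X) ^ e := by
  induction e with
  | zero => simp
  | succ e ih =>
    have h1 : ((1 + X : Polynomial ℝ)).natDegree ≤ 1 := by
      refine le_trans (natDegree_add_le _ _) ?_
      simp
    have h2 : ((1 + X : Polynomial ℝ) ^ e).natDegree ≤ e := ndY e
    have : (1 + X : Polynomial ℝ) ^ (e + 1) = (1 + X) * (1 + X) ^ e := by ring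
    rw [this, show e + 1 = 1 + e by omega, Polynomial.reflect_mul _ _ h1 h2, ih]
    have : reflect 1 (1 + X : Polynomial ℝ) = 1 + X := by
      rw [Polynomial.reflect_add, Polynomial.reflect_one, Polynomial.reflect_one_X]
      ring
    rw [this]

private lemma refl_term (c : ℝ) (k e N : ℕ) (h : N = 2 * k + e) :
    reflect N (C c * X ^ k * (1 + X) ^ e) = C c * X ^ k * (1 + X) ^ e := by
  subst h
  have hf : (C c * X ^ k : Polynomial ℝ).natDegree ≤ 2 * k :=
    le_trans (natDegree_C_mul_X_pow_le c k) (by omega)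
  have hg : ((1 + X : Polynomial ℝ) ^ e).natDegree ≤ e := ndY e
  rw [Polynomial.reflect_mul _ _ hf hg, refl_pow, Polynomial.reflect_C_mul_X_pow,
    Polynomial.revAt_le (by omega : k ≤ 2 * k), show 2 * k - k = k by omega]

private lemma refl_term2 (c : ℝ) (k e N : ℕ) (h : N = 2 * k + 1 + e) :
    reflect N (X * (C c * X ^ k * (1 + X) ^ e)) = C c * X ^ k * (1 + X) ^ e := by
  subst h
  have hshape : X * (C c * X ^ k * (1 + X) ^ e) = C c * X ^ (k + 1) * (1 + X) ^ e := by ring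
  have hf : (C c * X ^ (k + 1) : Polynomial ℝ).natDegree ≤ 2 * k + 1 :=
    le_trans (natDegree_C_mul_X_pow_le c (k + 1)) (by omega)
  have hg : ((1 + X : Polynomial ℝ) ^ e).natDegree ≤ e := ndY e
  rw [hshape, Polynomial.reflect_mul _ _ hf hg, refl_pow, Polynomial.reflect_C_mul_X_pow,
    Polynomial.revAt_le (by omega : k + 1 ≤ 2 * k + 1), show 2 * k + 1 - (k + 1) = k by omega]

private lemma indep2 (K1 K2 n : ℕ) (c d : ℕ → ℝ)
    (hK1 : ∀ k < K1, 2 * k ≤ n) (hK2 : ∀ k < K2, 2 * k + 1 ≤ n)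
    (hsum : (∑ k ∈ Finset.range K1, C (c k) * X ^ k * (1 + X) ^ (n - 2 * k))
      + X * (∑ k ∈ Finset.range K2, C (d k) * X ^ k * (1 + X) ^ (n - 1 - 2 * k)) = 0) :
    (∀ k < K1, c k = 0) ∧ (∀ k < K2, d k = 0) := by
  set A := ∑ k ∈ Finset.range K1, C (c k) * X ^ k * (1 + X) ^ (n - 2 * k) with hA
  set B := ∑ k ∈ Finset.range K2, C (d k) * X ^ k * (1 + X) ^ (n - 1 - 2 * k) with hB
  have hrefl : A + B = 0 := by
    have h := congrArg (reflect n) hsum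
    rw [Polynomial.reflect_zero, Polynomial.reflect_add] at h
    rw [hA, reflect_sum] at h
    rw [Finset.mul_sum, reflect_sum] at h
    have hA' : ∑ k ∈ Finset.range K1,
        reflect n (C (c k) * X ^ k * (1 + X) ^ (n - 2 * k)) = A := by
      rw [hA]
      refine Finset.sum_congr rfl fun k hk => ?_
      exact refl_term _ _ _ _ (by have := hK1 k (Finset.mem_range.1 hk); omega)
    have hB' : ∑ k ∈ Finset.range K2,
        reflect n (X * (C (d k) * X ^ k * (1 + X) ^ (n - 1 - 2 * k))) = B := by
      rw [hB]
      refine Finset.sum_congr rfl fun k hk => ?_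
      exact refl_term2 _ _ _ _ (by have := hK2 k (Finset.mem_range.1 hk); omega)
    rw [hA', hB'] at h
    exact h
  have hXB : (X - 1) * B = 0 := by
    have := sub_eq_zero.2 (hsum.trans hrefl.symm)
    calc (X - 1) * B = A + X * B - (A + B) := by ring
    _ = 0 := by rw [hsum, hrefl]; ring
  have hX1 : (X - 1 : Polynomial ℝ) ≠ 0 := by
    intro h
    have := congrArg (Polynomial.eval 0) h
    simp at this
  have hB0 : B = 0 := by
    rcases mul_eq_zero.1 hXB with h | h
    · exact absurd h hX1
    · exact h
  have hA0 : A = 0 := by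
    have := hrefl
    rw [hB0, add_zero] at this
    exact this
  exact ⟨indep1 K1 n c hA0, indep1 K2 (n - 1) d hB0⟩

private lemma key1 (c : ℝ) (k e : ℕ) :
    (2 * (2 * (k : Polynomial ℝ) + (e : Polynomial ℝ)) + 1) * (2 + 3 * X) *
        (C c * X ^ k * (1 + X) ^ e)
      - 2 * X * (1 + X) * derivative (C c * X ^ k * (1 + X) ^ e)
    = C ((4 * (2 * (k : ℝ) + (e : ℝ)) + 2 - 2 * (k : ℝ)) * c) * X ^ k * (1 + X) ^ (e + 1)
      + C ((4 * (k : ℝ) + 1) * c) * X * (X ^ k * (1 + X) ^ e) := by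
  have hd : derivative (C c * X ^ k * (1 + X) ^ e)
      = C c * ((k : Polynomial ℝ) * X ^ (k - 1) * (1 + X) ^ e
          + (e : Polynomial ℝ) * X ^ k * (1 + X) ^ (e - 1)) := by
    simp [derivative_mul, derivative_pow, derivative_X, derivative_one]
    ring
  rw [hd]
  simp only [map_mul, map_sub, map_add, map_ofNat, map_one, C_eq_natCast]
  rcases k with _ | k <;> rcases e with _ | e <;>
    simp only [Nat.cast_zero, Nat.cast_succ, pow_zero, Nat.succ_sub_one, Nat.zero_sub,
      pow_succ, Nat.cast_add, Nat.cast_one] <;> ring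

private lemma key2 (c : ℝ) (k e : ℕ) :
    (2 * (2 * (k : Polynomial ℝ) + (e : Polynomial ℝ) + 1) + 1) * (2 + 3 * X) *
        (C c * X ^ k * (1 + X) ^ e)
      - 2 * (1 + X) * (C c * X ^ k * (1 + X) ^ e)
      - 2 * X * (1 + X) * derivative (C c * X ^ k * (1 + X) ^ e)
    = C ((4 * (2 * (k : ℝ) + (e : ℝ) + 1) + 3 + 2 * (k : ℝ)) * c) * X ^ k * (1 + X) ^ (e + 1)
      - C ((4 * (k : ℝ) + 3) * c) * (X ^ k * (1 + X) ^ e) := by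
  have hd : derivative (C c * X ^ k * (1 + X) ^ e)
      = C c * ((k : Polynomial ℝ) * X ^ (k - 1) * (1 + X) ^ e
          + (e : Polynomial ℝ) * X ^ k * (1 + X) ^ (e - 1)) := by
    simp [derivative_mul, derivative_pow, derivative_X, derivative_one]
    ring
  rw [hd]
  simp only [map_mul, map_sub, map_add, map_ofNat, map_one, C_eq_natCast]
  rcases k with _ | k <;> rcases e with _ | e <;>
    simp only [Nat.cast_zero, Nat.cast_succ, pow_zero, Nat.succ_sub_one, Nat.zero_sub,
      pow_succ, Nat.cast_add, Nat.cast_one] <;> ring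

set_option maxHeartbeats 1000000 in
private lemma stepB (m p q : ℕ) (hp : p = m / 2) (hq : q = (m - 1) / 2) (hm : 1 ≤ m)
    (u v : ℕ → ℝ) :
    (2 * (m : Polynomial ℝ) + 1) * (2 + 3 * X) *
        ((∑ k ∈ Finset.range (p + 1), C (u k) * X ^ k * (1 + X) ^ (m - 2 * k))
          + X * ∑ k ∈ Finset.range (q + 1), C (v k) * X ^ k * (1 + X) ^ (m - 1 - 2 * k))
      - 2 * X * (1 + X) * derivative
        ((∑ k ∈ Finset.range (p + 1), C (u k) * X ^ k * (1 + X) ^ (m - 2 * k))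
          + X * ∑ k ∈ Finset.range (q + 1), C (v k) * X ^ k * (1 + X) ^ (m - 1 - 2 * k))
    = (∑ j ∈ Finset.range (q + 2),
        C ((if j ≤ p then (4 * (m : ℝ) + 2 - 2 * (j : ℝ)) * u j else 0)
            - (if j = 0 then 0 else (4 * (j : ℝ) - 1) * v (j - 1))) * X ^ j *
          (1 + X) ^ (m + 1 - 2 * j))
      + X * ∑ j ∈ Finset.range (p + 1),
        C ((4 * (j : ℝ) + 1) * u j
            + (if j ≤ q then (4 * (m : ℝ) + 3 + 2 * (j : ℝ)) * v j else 0)) * X ^ j *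
          (1 + X) ^ (m - 2 * j) := by
  have hqp : q ≤ p := by omega
  have hpq : p ≤ q + 1 := by omega
  -- B2 : the a-part
  have hB2 : (2 * (m : Polynomial ℝ) + 1) * (2 + 3 * X) *
        (∑ k ∈ Finset.range (p + 1), C (u k) * X ^ k * (1 + X) ^ (m - 2 * k))
      - 2 * X * (1 + X) * derivative
        (∑ k ∈ Finset.range (p + 1), C (u k) * X ^ k * (1 + X) ^ (m - 2 * k))
    = ∑ k ∈ Finset.range (p + 1),
        (C ((4 * (m : ℝ) + 2 - 2 * (k : ℝ)) * u k) * X ^ k * (1 + X) ^ (m + 1 - 2 * k)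
          + C ((4 * (k : ℝ) + 1) * u k) * X * (X ^ k * (1 + X) ^ (m - 2 * k))) := by
    rw [derivative_sum, Finset.mul_sum, Finset.mul_sum, ← Finset.sum_sub_distrib]
    refine Finset.sum_congr rfl fun k hk => ?_
    have hk' : 2 * k ≤ m := by
      have := Finset.mem_range.1 hk; omega
    obtain ⟨e, hme⟩ : ∃ e, m = 2 * k + e := ⟨m - 2 * k, by omega⟩
    rw [show m + 1 - 2 * k = e + 1 by omega, show m - 2 * k = e by omega]
    rw [show ((m : Polynomial ℝ)) = 2 * (k : Polynomial ℝ) + (e : Polynomial ℝ) by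
      exact_mod_cast hme]
    rw [show ((m : ℝ)) = 2 * (k : ℝ) + (e : ℝ) by exact_mod_cast hme]
    exact key1 (u k) k e
  -- B3 : the b-part
  have hB3 : (2 * (m : Polynomial ℝ) + 1) * (2 + 3 * X) *
        (∑ k ∈ Finset.range (q + 1), C (v k) * X ^ k * (1 + X) ^ (m - 1 - 2 * k))
      - 2 * (1 + X) *
        (∑ k ∈ Finset.range (q + 1), C (v k) * X ^ k * (1 + X) ^ (m - 1 - 2 * k))
      - 2 * X * (1 + X) * derivative
        (∑ k ∈ Finset.range (q + 1), C (v k) * X ^ k * (1 + X) ^ (m - 1 - 2 * k))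
    = ∑ k ∈ Finset.range (q + 1),
        (C ((4 * (m : ℝ) + 3 + 2 * (k : ℝ)) * v k) * X ^ k * (1 + X) ^ (m - 2 * k)
          - C ((4 * (k : ℝ) + 3) * v k) * (X ^ k * (1 + X) ^ (m - 1 - 2 * k))) := by
    rw [derivative_sum, Finset.mul_sum, Finset.mul_sum, Finset.mul_sum,
      ← Finset.sum_sub_distrib, ← Finset.sum_sub_distrib]
    refine Finset.sum_congr rfl fun k hk => ?_
    have hk' : 2 * k ≤ m - 1 := by
      have := Finset.mem_range.1 hk; omega
    obtain ⟨e, hme⟩ : ∃ e, m = 2 * k + e + 1 := ⟨m - 1 - 2 * k, by omega⟩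
    rw [show m - 2 * k = e + 1 by omega, show m - 1 - 2 * k = e by omega]
    rw [show ((m : Polynomial ℝ)) = 2 * (k : Polynomial ℝ) + (e : Polynomial ℝ) + 1 by
      exact_mod_cast hme]
    rw [show ((m : ℝ)) = 2 * (k : ℝ) + (e : ℝ) + 1 by exact_mod_cast hme]
    exact key2 (v k) k e
  -- the four reshuffling identities
  have hU1 : ∑ j ∈ Finset.range (q + 2),
        C (if j ≤ p then (4 * (m : ℝ) + 2 - 2 * (j : ℝ)) * u j else 0) * X ^ j *
          (1 + X) ^ (m + 1 - 2 * j)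
      = ∑ k ∈ Finset.range (p + 1),
        C ((4 * (m : ℝ) + 2 - 2 * (k : ℝ)) * u k) * X ^ k * (1 + X) ^ (m + 1 - 2 * k) := by
    rw [← Finset.sum_subset (Finset.range_subset_range.2 (by omega : p + 1 ≤ q + 2))]
    · refine Finset.sum_congr rfl fun j hj => ?_
      rw [if_pos (by have := Finset.mem_range.1 hj; omega)]
    · intro j hj hj'
      rw [if_neg (by simp only [Finset.mem_range] at hj hj'; omega)]
      simp
  have hU2 : ∑ j ∈ Finset.range (q + 2),
        C (if j = 0 then 0 else (4 * (j : ℝ) - 1) * v (j - 1)) * X ^ j *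
          (1 + X) ^ (m + 1 - 2 * j)
      = ∑ k ∈ Finset.range (q + 1),
        X * (C ((4 * (k : ℝ) + 3) * v k) * (X ^ k * (1 + X) ^ (m - 1 - 2 * k))) := by
    rw [Finset.sum_range_succ']
    have h0 : C (if (0:ℕ) = 0 then (0:ℝ) else (4 * ((0:ℕ) : ℝ) - 1) * v (0 - 1)) * X ^ 0 *
        (1 + X) ^ (m + 1 - 2 * 0) = 0 := by simp
    rw [h0, add_zero]
    refine Finset.sum_congr rfl fun k hk => ?_
    rw [if_neg (Nat.succ_ne_zero k), show m + 1 - 2 * (k + 1) = m - 1 - 2 * k by omega]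
    rw [show ((((k + 1 : ℕ)) : ℝ)) = (k : ℝ) + 1 by push_cast; ring]
    rw [show (4 * ((k : ℝ) + 1) - 1) = 4 * (k : ℝ) + 3 by ring]
    simp only [Nat.add_sub_cancel]
    ring
  have hV1 : ∑ j ∈ Finset.range (p + 1),
        X * (C ((4 * (j : ℝ) + 1) * u j) * X ^ j * (1 + X) ^ (m - 2 * j))
      = ∑ k ∈ Finset.range (p + 1),
        C ((4 * (k : ℝ) + 1) * u k) * X * (X ^ k * (1 + X) ^ (m - 2 * k)) := by
    refine Finset.sum_congr rfl fun k _ => ?_; ring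
  have hV2 : ∑ j ∈ Finset.range (p + 1),
        X * (C (if j ≤ q then (4 * (m : ℝ) + 3 + 2 * (j : ℝ)) * v j else 0) * X ^ j *
          (1 + X) ^ (m - 2 * j))
      = ∑ k ∈ Finset.range (q + 1),
        X * (C ((4 * (m : ℝ) + 3 + 2 * (k : ℝ)) * v k) * X ^ k * (1 + X) ^ (m - 2 * k)) := by
    rw [← Finset.sum_subset (Finset.range_subset_range.2 (by omega : q + 1 ≤ p + 1))]
    · refine Finset.sum_congr rfl fun j hj => ?_
      rw [if_pos (by have := Finset.mem_range.1 hj; omega)]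
    · intro j hj hj'
      rw [if_neg (by simp only [Finset.mem_range] at hj hj'; omega)]
      simp
  -- assemble
  have hsplit : (2 * (m : Polynomial ℝ) + 1) * (2 + 3 * X) *
        ((∑ k ∈ Finset.range (p + 1), C (u k) * X ^ k * (1 + X) ^ (m - 2 * k))
          + X * ∑ k ∈ Finset.range (q + 1), C (v k) * X ^ k * (1 + X) ^ (m - 1 - 2 * k))
      - 2 * X * (1 + X) * derivative
        ((∑ k ∈ Finset.range (p + 1), C (u k) * X ^ k * (1 + X) ^ (m - 2 * k))
          + X * ∑ k ∈ Finset.range (q + 1), C (v k) * X ^ k * (1 + X) ^ (m - 1 - 2 * k))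
      = ((2 * (m : Polynomial ℝ) + 1) * (2 + 3 * X) *
          (∑ k ∈ Finset.range (p + 1), C (u k) * X ^ k * (1 + X) ^ (m - 2 * k))
        - 2 * X * (1 + X) * derivative
          (∑ k ∈ Finset.range (p + 1), C (u k) * X ^ k * (1 + X) ^ (m - 2 * k)))
      + X * ((2 * (m : Polynomial ℝ) + 1) * (2 + 3 * X) *
          (∑ k ∈ Finset.range (q + 1), C (v k) * X ^ k * (1 + X) ^ (m - 1 - 2 * k))
        - 2 * (1 + X) *
          (∑ k ∈ Finset.range (q + 1), C (v k) * X ^ k * (1 + X) ^ (m - 1 - 2 * k))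
        - 2 * X * (1 + X) * derivative
          (∑ k ∈ Finset.range (q + 1), C (v k) * X ^ k * (1 + X) ^ (m - 1 - 2 * k))) := by
    rw [derivative_add, derivative_mul, derivative_X]
    ring
  rw [hsplit, hB2, hB3]
  have hsplitA : ∑ j ∈ Finset.range (q + 2),
        C ((if j ≤ p then (4 * (m : ℝ) + 2 - 2 * (j : ℝ)) * u j else 0)
            - (if j = 0 then 0 else (4 * (j : ℝ) - 1) * v (j - 1))) * X ^ j *
          (1 + X) ^ (m + 1 - 2 * j)
      = (∑ j ∈ Finset.range (q + 2),
          C (if j ≤ p then (4 * (m : ℝ) + 2 - 2 * (j : ℝ)) * u j else 0) * X ^ j *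
            (1 + X) ^ (m + 1 - 2 * j))
        - (∑ j ∈ Finset.range (q + 2),
          C (if j = 0 then 0 else (4 * (j : ℝ) - 1) * v (j - 1)) * X ^ j *
            (1 + X) ^ (m + 1 - 2 * j)) := by
    rw [← Finset.sum_sub_distrib]
    refine Finset.sum_congr rfl fun j _ => ?_
    rw [C_sub]; ring
  have hsplitB : X * ∑ j ∈ Finset.range (p + 1),
        C ((4 * (j : ℝ) + 1) * u j
            + (if j ≤ q then (4 * (m : ℝ) + 3 + 2 * (j : ℝ)) * v j else 0)) * X ^ j *
          (1 + X) ^ (m - 2 * j)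
      = (∑ j ∈ Finset.range (p + 1),
          X * (C ((4 * (j : ℝ) + 1) * u j) * X ^ j * (1 + X) ^ (m - 2 * j)))
        + (∑ j ∈ Finset.range (p + 1),
          X * (C (if j ≤ q then (4 * (m : ℝ) + 3 + 2 * (j : ℝ)) * v j else 0) * X ^ j *
            (1 + X) ^ (m - 2 * j))) := by
    rw [Finset.mul_sum, ← Finset.sum_add_distrib]
    refine Finset.sum_congr rfl fun j _ => ?_
    rw [C_add]; ring
  have hL2 : X * ∑ k ∈ Finset.range (q + 1),
        (C ((4 * (m : ℝ) + 3 + 2 * (k : ℝ)) * v k) * X ^ k * (1 + X) ^ (m - 2 * k)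
          - C ((4 * (k : ℝ) + 3) * v k) * (X ^ k * (1 + X) ^ (m - 1 - 2 * k)))
      = (∑ k ∈ Finset.range (q + 1),
          X * (C ((4 * (m : ℝ) + 3 + 2 * (k : ℝ)) * v k) * X ^ k * (1 + X) ^ (m - 2 * k)))
        - (∑ k ∈ Finset.range (q + 1),
          X * (C ((4 * (k : ℝ) + 3) * v k) * (X ^ k * (1 + X) ^ (m - 1 - 2 * k)))) := by
    rw [Finset.mul_sum, ← Finset.sum_sub_distrib]
    refine Finset.sum_congr rfl fun j _ => ?_
    ring
  rw [Finset.sum_add_distrib, hL2, hsplitA, hsplitB, hU1, hU2, hV1, hV2]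
  ring

private lemma hXd2 (c : ℝ) (k : ℕ) :
    2 * X * derivative (C c * X ^ k) = C (2 * (k : ℝ) * c) * X ^ k := by
  rcases k with _ | k
  · simp
  · rw [derivative_C_mul_X_pow, Nat.succ_sub_one]
    simp only [C_mul, map_ofNat, pow_succ]
    ring

private lemma hXd4 (c : ℝ) (k : ℕ) :
    4 * X ^ 2 * derivative (C c * X ^ k) = C (4 * (k : ℝ) * c) * X ^ (k + 1) := by
  rcases k with _ | k
  · simp
  · rw [derivative_C_mul_X_pow, Nat.succ_sub_one]
    simp only [C_mul, map_ofNat, pow_succ]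
    ring

private lemma stepD1 (m p q : ℕ) (hp : p = m / 2) (hq : q = (m - 1) / 2) (hm : 1 ≤ m)
    (u v w : ℕ → ℝ)
    (hw : ∀ j < q + 2, w j
      = (if j ≤ p then (4 * (m : ℝ) + 2 - 2 * (j : ℝ)) * u j else 0)
        - (if j = 0 then 0 else (4 * (j : ℝ) - 1) * v (j - 1))) :
    ∑ j ∈ Finset.range (q + 2), C ((-1 : ℝ) ^ j * w j) * X ^ j
    = (4 * (m : Polynomial ℝ) + 2) * (∑ k ∈ Finset.range (p + 1), C ((-1 : ℝ) ^ k * u k) * X ^ k)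
      - 2 * X * derivative (∑ k ∈ Finset.range (p + 1), C ((-1 : ℝ) ^ k * u k) * X ^ k)
      + 3 * X * (∑ k ∈ Finset.range (q + 1), C ((-1 : ℝ) ^ k * v k) * X ^ k)
      + 4 * X ^ 2 * derivative (∑ k ∈ Finset.range (q + 1), C ((-1 : ℝ) ^ k * v k) * X ^ k) := by
  -- RHS pieces
  have hR1 : (4 * (m : Polynomial ℝ) + 2) *
        (∑ k ∈ Finset.range (p + 1), C ((-1 : ℝ) ^ k * u k) * X ^ k)
      - 2 * X * derivative (∑ k ∈ Finset.range (p + 1), C ((-1 : ℝ) ^ k * u k) * X ^ k)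
      = ∑ k ∈ Finset.range (p + 1),
          C ((-1 : ℝ) ^ k * ((4 * (m : ℝ) + 2 - 2 * (k : ℝ)) * u k)) * X ^ k := by
    rw [derivative_sum, Finset.mul_sum, Finset.mul_sum, ← Finset.sum_sub_distrib]
    refine Finset.sum_congr rfl fun k _ => ?_
    rw [hXd2]
    simp only [C_mul, C_add, C_sub, map_ofNat, map_one, C_eq_natCast]
    ring
  have hR2 : 3 * X * (∑ k ∈ Finset.range (q + 1), C ((-1 : ℝ) ^ k * v k) * X ^ k)
      + 4 * X ^ 2 * derivative (∑ k ∈ Finset.range (q + 1), C ((-1 : ℝ) ^ k * v k) * X ^ k)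
      = ∑ k ∈ Finset.range (q + 1),
          C ((-1 : ℝ) ^ k * ((4 * (k : ℝ) + 3) * v k)) * X ^ (k + 1) := by
    rw [derivative_sum, Finset.mul_sum, Finset.mul_sum, ← Finset.sum_add_distrib]
    refine Finset.sum_congr rfl fun k _ => ?_
    rw [hXd4]
    simp only [C_mul, C_add, C_sub, map_ofNat, map_one, C_eq_natCast, pow_succ]
    ring
  -- LHS pieces
  have hL : ∑ j ∈ Finset.range (q + 2), C ((-1 : ℝ) ^ j * w j) * X ^ j
      = (∑ j ∈ Finset.range (q + 2),
          C ((-1 : ℝ) ^ j * (if j ≤ p then (4 * (m : ℝ) + 2 - 2 * (j : ℝ)) * u j else 0)) * X ^ j)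
        - (∑ j ∈ Finset.range (q + 2),
          C ((-1 : ℝ) ^ j * (if j = 0 then 0 else (4 * (j : ℝ) - 1) * v (j - 1))) * X ^ j) := by
    rw [← Finset.sum_sub_distrib]
    refine Finset.sum_congr rfl fun j hj => ?_
    rw [hw j (Finset.mem_range.1 hj)]
    rw [show ((-1 : ℝ) ^ j * ((if j ≤ p then (4 * (m : ℝ) + 2 - 2 * (j : ℝ)) * u j else 0)
            - (if j = 0 then 0 else (4 * (j : ℝ) - 1) * v (j - 1))))
        = ((-1 : ℝ) ^ j * (if j ≤ p then (4 * (m : ℝ) + 2 - 2 * (j : ℝ)) * u j else 0))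
          - ((-1 : ℝ) ^ j * (if j = 0 then 0 else (4 * (j : ℝ) - 1) * v (j - 1))) by ring]
    rw [C_sub]
    ring
  have hL1 : ∑ j ∈ Finset.range (q + 2),
        C ((-1 : ℝ) ^ j * (if j ≤ p then (4 * (m : ℝ) + 2 - 2 * (j : ℝ)) * u j else 0)) * X ^ j
      = ∑ k ∈ Finset.range (p + 1),
          C ((-1 : ℝ) ^ k * ((4 * (m : ℝ) + 2 - 2 * (k : ℝ)) * u k)) * X ^ k := by
    rw [← Finset.sum_subset (Finset.range_subset_range.2 (by omega : p + 1 ≤ q + 2))]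
    · refine Finset.sum_congr rfl fun j hj => ?_
      rw [if_pos (by have := Finset.mem_range.1 hj; omega)]
    · intro j hj hj'
      rw [if_neg (by simp only [Finset.mem_range] at hj hj'; omega)]
      simp
  have hL2 : ∑ j ∈ Finset.range (q + 2),
        C ((-1 : ℝ) ^ j * (if j = 0 then 0 else (4 * (j : ℝ) - 1) * v (j - 1))) * X ^ j
      = - ∑ k ∈ Finset.range (q + 1),
          C ((-1 : ℝ) ^ k * ((4 * (k : ℝ) + 3) * v k)) * X ^ (k + 1) := by
    rw [Finset.sum_range_succ']
    have h0 : C ((-1 : ℝ) ^ (0:ℕ) *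
        (if (0:ℕ) = 0 then 0 else (4 * ((0:ℕ) : ℝ) - 1) * v (0 - 1))) * X ^ (0:ℕ) = 0 := by
      simp
    rw [h0, add_zero, ← Finset.sum_neg_distrib]
    refine Finset.sum_congr rfl fun k _ => ?_
    rw [if_neg (Nat.succ_ne_zero k)]
    rw [show ((-1 : ℝ) ^ (k + 1) * ((4 * (((k + 1 : ℕ)) : ℝ) - 1) * v (k + 1 - 1)))
        = -((-1 : ℝ) ^ k * ((4 * (k : ℝ) + 3) * v k)) by
      simp only [Nat.add_sub_cancel]; push_cast; ring]
    rw [map_neg]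
    ring
  rw [hL, hL1, hL2]
  linear_combination -hR1 - hR2

private lemma stepD2 (m p q : ℕ) (hp : p = m / 2) (hq : q = (m - 1) / 2) (hm : 1 ≤ m)
    (u v w : ℕ → ℝ)
    (hw : ∀ j < p + 1, w j
      = (4 * (j : ℝ) + 1) * u j
        + (if j ≤ q then (4 * (m : ℝ) + 3 + 2 * (j : ℝ)) * v j else 0)) :
    ∑ j ∈ Finset.range (p + 1), C ((-1 : ℝ) ^ j * w j) * X ^ j
    = (∑ k ∈ Finset.range (p + 1), C ((-1 : ℝ) ^ k * u k) * X ^ k)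
      + 4 * X * derivative (∑ k ∈ Finset.range (p + 1), C ((-1 : ℝ) ^ k * u k) * X ^ k)
      + (4 * (m : Polynomial ℝ) + 3) *
          (∑ k ∈ Finset.range (q + 1), C ((-1 : ℝ) ^ k * v k) * X ^ k)
      + 2 * X * derivative (∑ k ∈ Finset.range (q + 1), C ((-1 : ℝ) ^ k * v k) * X ^ k) := by
  have hXd4' : ∀ (c : ℝ) (k : ℕ),
      4 * X * derivative (C c * X ^ k) = C (4 * (k : ℝ) * c) * X ^ k := by
    intro c k
    rcases k with _ | k
    · simp
    · rw [derivative_C_mul_X_pow, Nat.succ_sub_one]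
      simp only [C_mul, map_ofNat, pow_succ]
      ring
  have hR1 : (∑ k ∈ Finset.range (p + 1), C ((-1 : ℝ) ^ k * u k) * X ^ k)
      + 4 * X * derivative (∑ k ∈ Finset.range (p + 1), C ((-1 : ℝ) ^ k * u k) * X ^ k)
      = ∑ k ∈ Finset.range (p + 1),
          C ((-1 : ℝ) ^ k * ((4 * (k : ℝ) + 1) * u k)) * X ^ k := by
    rw [derivative_sum, Finset.mul_sum, ← Finset.sum_add_distrib]
    refine Finset.sum_congr rfl fun k _ => ?_
    rw [hXd4']
    simp only [C_mul, C_add, C_sub, map_ofNat, map_one, C_eq_natCast]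
    ring
  have hR2 : (4 * (m : Polynomial ℝ) + 3) *
        (∑ k ∈ Finset.range (q + 1), C ((-1 : ℝ) ^ k * v k) * X ^ k)
      + 2 * X * derivative (∑ k ∈ Finset.range (q + 1), C ((-1 : ℝ) ^ k * v k) * X ^ k)
      = ∑ k ∈ Finset.range (q + 1),
          C ((-1 : ℝ) ^ k * ((4 * (m : ℝ) + 3 + 2 * (k : ℝ)) * v k)) * X ^ k := by
    rw [derivative_sum, Finset.mul_sum, Finset.mul_sum, ← Finset.sum_add_distrib]
    refine Finset.sum_congr rfl fun k _ => ?_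
    rw [hXd2]
    simp only [C_mul, C_add, C_sub, map_ofNat, map_one, C_eq_natCast]
    ring
  have hL : ∑ j ∈ Finset.range (p + 1), C ((-1 : ℝ) ^ j * w j) * X ^ j
      = (∑ j ∈ Finset.range (p + 1),
          C ((-1 : ℝ) ^ j * ((4 * (j : ℝ) + 1) * u j)) * X ^ j)
        + (∑ j ∈ Finset.range (p + 1),
          C ((-1 : ℝ) ^ j *
            (if j ≤ q then (4 * (m : ℝ) + 3 + 2 * (j : ℝ)) * v j else 0)) * X ^ j) := by
    rw [← Finset.sum_add_distrib]
    refine Finset.sum_congr rfl fun j hj => ?_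
    rw [hw j (Finset.mem_range.1 hj)]
    rw [show ((-1 : ℝ) ^ j * ((4 * (j : ℝ) + 1) * u j
            + (if j ≤ q then (4 * (m : ℝ) + 3 + 2 * (j : ℝ)) * v j else 0)))
        = ((-1 : ℝ) ^ j * ((4 * (j : ℝ) + 1) * u j))
          + ((-1 : ℝ) ^ j * (if j ≤ q then (4 * (m : ℝ) + 3 + 2 * (j : ℝ)) * v j else 0))
        by ring]
    rw [C_add]
    ring
  have hL2 : ∑ j ∈ Finset.range (p + 1),
        C ((-1 : ℝ) ^ j *
          (if j ≤ q then (4 * (m : ℝ) + 3 + 2 * (j : ℝ)) * v j else 0)) * X ^ j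
      = ∑ k ∈ Finset.range (q + 1),
          C ((-1 : ℝ) ^ k * ((4 * (m : ℝ) + 3 + 2 * (k : ℝ)) * v k)) * X ^ k := by
    rw [← Finset.sum_subset (Finset.range_subset_range.2 (by omega : q + 1 ≤ p + 1))]
    · refine Finset.sum_congr rfl fun j hj => ?_
      rw [if_pos (by have := Finset.mem_range.1 hj; omega)]
    · intro j hj hj'
      rw [if_neg (by simp only [Finset.mem_range] at hj hj'; omega)]
      simp
  rw [hL, hL2]
  linear_combination -hR1 - hR2

theorem alpha_beta_polynomial_recurrence (Q a b : ℕ → Polynomial ℝ) (α β : ℕ → ℕ → ℝ)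
    (h0 : Q 0 = 1)
    (hrec : ∀ m : ℕ, Q (m + 1) =
      (2 * (m : Polynomial ℝ) + 1) * (2 + 3 * Polynomial.X) * Q m
        - 2 * Polynomial.X * (1 + Polynomial.X) * Polynomial.derivative (Q m))
    (ha : ∀ m : ℕ, (1 - Polynomial.X) * a m = Q m - Polynomial.X * Polynomial.reflect m (Q m))
    (hb : ∀ m : ℕ, (Polynomial.X - 1) * b m = Q m - Polynomial.reflect m (Q m))
    (haexp : ∀ m : ℕ, a m = ∑ k ∈ Finset.range (m / 2 + 1),
      Polynomial.C (α m k) * Polynomial.X ^ k * (1 + Polynomial.X) ^ (m - 2 * k))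
    (hbexp : ∀ m : ℕ, b m = ∑ k ∈ Finset.range ((m - 1) / 2 + 1),
      Polynomial.C (β m k) * Polynomial.X ^ k * (1 + Polynomial.X) ^ (m - 1 - 2 * k))
    (αP βP : ℕ → Polynomial ℝ)
    (hαP : ∀ m : ℕ, αP m = ∑ k ∈ Finset.range (m / 2 + 1),
      Polynomial.C ((-1 : ℝ) ^ k * α m k) * Polynomial.X ^ k)
    (hβP : ∀ m : ℕ, βP m = ∑ k ∈ Finset.range ((m - 1) / 2 + 1),
      Polynomial.C ((-1 : ℝ) ^ k * β m k) * Polynomial.X ^ k) :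
    αP 0 = 1 ∧ βP 0 = 0 ∧
    (∀ m : ℕ, αP (m + 1) =
      (4 * (m : Polynomial ℝ) + 2) * αP m - 2 * Polynomial.X * Polynomial.derivative (αP m)
        + 3 * Polynomial.X * βP m + 4 * Polynomial.X ^ 2 * Polynomial.derivative (βP m)) ∧
    (∀ m : ℕ, βP (m + 1) =
      αP m + 4 * Polynomial.X * Polynomial.derivative (αP m)
        + (4 * (m : Polynomial ℝ) + 3) * βP m
        + 2 * Polynomial.X * Polynomial.derivative (βP m)) := by
  have h1X : (1 - X : Polynomial ℝ) ≠ 0 := fun h => by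
    simpa using congrArg (Polynomial.eval 0) h
  have hQab : ∀ n, Q n = a n + X * b n := by
    intro n
    apply mul_left_cancel₀ h1X
    linear_combination -(ha n) + X * (hb n)
  have ha0 : a 0 = 1 := by
    apply mul_left_cancel₀ h1X
    rw [ha 0, h0, Polynomial.reflect_one]
    ring
  have hb0 : b 0 = 0 := by
    have hX1 : (X - 1 : Polynomial ℝ) ≠ 0 := fun h => by
      simpa using congrArg (Polynomial.eval 0) h
    apply mul_left_cancel₀ hX1
    rw [hb 0, h0, Polynomial.reflect_one]
    ring
  have hα00 : α 0 0 = 1 := by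
    have h := haexp 0
    rw [show ((0:ℕ) / 2 + 1) = 1 by norm_num, Finset.sum_range_one, ha0] at h
    have h' : C (α 0 0) = C (1 : ℝ) := by
      rw [C_1]
      simpa using h.symm
    exact C_inj.1 h'
  have hβ00 : β 0 0 = 0 := by
    have h := hbexp 0
    rw [show (((0:ℕ) - 1) / 2 + 1) = 1 by norm_num, Finset.sum_range_one, hb0] at h
    have h' : C (β 0 0) = C (0 : ℝ) := by
      rw [C_0]
      simpa using h.symm
    exact C_inj.1 h'
  have hc1 : αP 0 = 1 := by
    rw [hαP 0, show ((0:ℕ) / 2 + 1) = 1 by norm_num, Finset.sum_range_one]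
    simp [hα00]
  have hc2 : βP 0 = 0 := by
    rw [hβP 0, show (((0:ℕ) - 1) / 2 + 1) = 1 by norm_num, Finset.sum_range_one]
    simp [hβ00]
  -- the coefficient-level recurrence
  have hco : ∀ m : ℕ,
      (∀ j < (m + 1) / 2 + 1, α (m + 1) j
        = (if j ≤ m / 2 then (4 * (m : ℝ) + 2 - 2 * (j : ℝ)) * α m j else 0)
          - (if j = 0 then 0 else (4 * (j : ℝ) - 1) * β m (j - 1)))
      ∧ (∀ j < m / 2 + 1, β (m + 1) j
        = (4 * (j : ℝ) + 1) * α m j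
          + (if j ≤ (m - 1) / 2 then (4 * (m : ℝ) + 3 + 2 * (j : ℝ)) * β m j else 0)) := by
    intro m
    have hE1 : a (m + 1) + X * b (m + 1)
        = (2 * (m : Polynomial ℝ) + 1) * (2 + 3 * X) * (a m + X * b m)
          - 2 * X * (1 + X) * derivative (a m + X * b m) := by
      rw [← hQab (m + 1), ← hQab m]
      exact hrec m
    rcases Nat.eq_zero_or_pos m with rfl | hm
    · -- m = 0 case
      have h2 : a 1 + X * b 1 = 2 + 3 * X := by
        rw [hE1, ha0, hb0]
        simp
        try push_cast
        try ring
      have hEa := haexp 1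
      rw [show ((1:ℕ) / 2 + 1) = 1 by norm_num, Finset.sum_range_one] at hEa
      have hEb := hbexp 1
      rw [show (((1:ℕ) - 1) / 2 + 1) = 1 by norm_num, Finset.sum_range_one] at hEb
      have h2' : C (α 1 0) * X ^ 0 * (1 + X) ^ (1 - 2 * 0)
          + X * (C (β 1 0) * X ^ 0 * (1 + X) ^ (1 - 1 - 2 * 0)) = 2 + 3 * X := by
        rw [← hEa, ← hEb]
        exact h2
      have hdiff : (∑ j ∈ Finset.range 1,
            C ((fun j => α 1 j - 2) j) * X ^ j * (1 + X) ^ (1 - 2 * j))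
          + X * (∑ j ∈ Finset.range 1,
            C ((fun j => β 1 j - 1) j) * X ^ j * (1 + X) ^ (1 - 1 - 2 * j)) = 0 := by
        simp only [Finset.sum_range_one]
        rw [C_sub, C_sub, C_1, map_ofNat]
        linear_combination h2'
      have hind := indep2 1 1 1 (fun j => α 1 j - 2) (fun j => β 1 j - 1)
        (by intro k hk; omega) (by intro k hk; omega) hdiff
      have hα10 : α 1 0 = 2 := by
        have := hind.1 0 (by norm_num)
        have := sub_eq_zero.1 this
        simpa using this
      have hβ10 : β 1 0 = 1 := by
        have := hind.2 0 (by norm_num)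
        have := sub_eq_zero.1 this
        simpa using this
      constructor
      · intro j hj
        have hj0 : j = 0 := by omega
        subst hj0
        rw [hα10]
        simp [hα00]
        try norm_num
      · intro j hj
        have hj0 : j = 0 := by omega
        subst hj0
        rw [hβ10]
        simp [hα00, hβ00]
    · -- m ≥ 1 case
      have hstep := stepB m (m / 2) ((m - 1) / 2) rfl rfl hm (α m) (β m)
      have hP : (m + 1) / 2 + 1 = (m - 1) / 2 + 2 := by omega
      have hEa := haexp (m + 1)
      rw [hP] at hEa
      have hEb := hbexp (m + 1)
      simp only [Nat.add_sub_cancel] at hEb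
      have hMain : (∑ j ∈ Finset.range ((m - 1) / 2 + 2),
            C (α (m + 1) j) * X ^ j * (1 + X) ^ (m + 1 - 2 * j))
          + X * (∑ j ∈ Finset.range (m / 2 + 1),
            C (β (m + 1) j) * X ^ j * (1 + X) ^ (m - 2 * j))
          = (∑ j ∈ Finset.range ((m - 1) / 2 + 2),
              C ((if j ≤ m / 2 then (4 * (m : ℝ) + 2 - 2 * (j : ℝ)) * α m j else 0)
                - (if j = 0 then 0 else (4 * (j : ℝ) - 1) * β m (j - 1))) * X ^ j *
              (1 + X) ^ (m + 1 - 2 * j))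
            + X * ∑ j ∈ Finset.range (m / 2 + 1),
              C ((4 * (j : ℝ) + 1) * α m j
                + (if j ≤ (m - 1) / 2 then (4 * (m : ℝ) + 3 + 2 * (j : ℝ)) * β m j else 0)) *
                X ^ j * (1 + X) ^ (m - 2 * j) := by
        rw [← hEa, ← hEb, hE1, haexp m, hbexp m]
        exact hstep
      have hdiff : (∑ j ∈ Finset.range ((m - 1) / 2 + 2),
            C ((fun j => α (m + 1) j
              - ((if j ≤ m / 2 then (4 * (m : ℝ) + 2 - 2 * (j : ℝ)) * α m j else 0)
                - (if j = 0 then 0 else (4 * (j : ℝ) - 1) * β m (j - 1)))) j) * X ^ j *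
            (1 + X) ^ (m + 1 - 2 * j))
          + X * (∑ j ∈ Finset.range (m / 2 + 1),
            C ((fun j => β (m + 1) j
              - ((4 * (j : ℝ) + 1) * α m j
                + (if j ≤ (m - 1) / 2 then (4 * (m : ℝ) + 3 + 2 * (j : ℝ)) * β m j else 0))) j) *
            X ^ j * (1 + X) ^ (m + 1 - 1 - 2 * j)) = 0 := by
        have e1 : (∑ j ∈ Finset.range ((m - 1) / 2 + 2),
              C (α (m + 1) j
                - ((if j ≤ m / 2 then (4 * (m : ℝ) + 2 - 2 * (j : ℝ)) * α m j else 0)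
                  - (if j = 0 then 0 else (4 * (j : ℝ) - 1) * β m (j - 1)))) * X ^ j *
              (1 + X) ^ (m + 1 - 2 * j))
            = (∑ j ∈ Finset.range ((m - 1) / 2 + 2),
                C (α (m + 1) j) * X ^ j * (1 + X) ^ (m + 1 - 2 * j))
              - (∑ j ∈ Finset.range ((m - 1) / 2 + 2),
                C ((if j ≤ m / 2 then (4 * (m : ℝ) + 2 - 2 * (j : ℝ)) * α m j else 0)
                  - (if j = 0 then 0 else (4 * (j : ℝ) - 1) * β m (j - 1))) * X ^ j *
                (1 + X) ^ (m + 1 - 2 * j)) := by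
          rw [← Finset.sum_sub_distrib]
          refine Finset.sum_congr rfl fun j _ => ?_
          rw [C_sub]
          ring
        have e2 : X * (∑ j ∈ Finset.range (m / 2 + 1),
              C (β (m + 1) j
                - ((4 * (j : ℝ) + 1) * α m j
                  + (if j ≤ (m - 1) / 2 then (4 * (m : ℝ) + 3 + 2 * (j : ℝ)) * β m j else 0))) *
              X ^ j * (1 + X) ^ (m + 1 - 1 - 2 * j))
            = (X * ∑ j ∈ Finset.range (m / 2 + 1),
                C (β (m + 1) j) * X ^ j * (1 + X) ^ (m - 2 * j))
              - (X * ∑ j ∈ Finset.range (m / 2 + 1),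
                C ((4 * (j : ℝ) + 1) * α m j
                  + (if j ≤ (m - 1) / 2 then (4 * (m : ℝ) + 3 + 2 * (j : ℝ)) * β m j else 0)) *
                X ^ j * (1 + X) ^ (m - 2 * j)) := by
          rw [Finset.mul_sum, Finset.mul_sum, Finset.mul_sum, ← Finset.sum_sub_distrib]
          refine Finset.sum_congr rfl fun j _ => ?_
          rw [show m + 1 - 1 - 2 * j = m - 2 * j by omega, C_sub]
          ring
        rw [e1, e2]
        linear_combination hMain
      have hind := indep2 ((m - 1) / 2 + 2) (m / 2 + 1) (m + 1)
        (fun j => α (m + 1) j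
          - ((if j ≤ m / 2 then (4 * (m : ℝ) + 2 - 2 * (j : ℝ)) * α m j else 0)
            - (if j = 0 then 0 else (4 * (j : ℝ) - 1) * β m (j - 1))))
        (fun j => β (m + 1) j
          - ((4 * (j : ℝ) + 1) * α m j
            + (if j ≤ (m - 1) / 2 then (4 * (m : ℝ) + 3 + 2 * (j : ℝ)) * β m j else 0)))
        (by intro k hk; omega) (by intro k hk; omega) hdiff
      constructor
      · intro j hj
        exact sub_eq_zero.1 (hind.1 j (by omega))
      · intro j hj
        exact sub_eq_zero.1 (hind.2 j (by omega))
  refine ⟨hc1, hc2, fun m => ?_, fun m => ?_⟩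
  · -- αP recurrence
    rcases Nat.eq_zero_or_pos m with rfl | hm
    · have hα10 : α 1 0 = 2 := by
        have h := (hco 0).1 0 (by norm_num)
        rw [h, hα00]
        norm_num
      rw [hαP 1, show ((1:ℕ) / 2 + 1) = 1 by norm_num, Finset.sum_range_one, hα10,
        hc1, hc2]
      simp [map_ofNat]
      try push_cast
      try norm_num
    · have h := stepD1 m (m / 2) ((m - 1) / 2) rfl rfl hm (α m) (β m) (α (m + 1))
        (fun j hj => (hco m).1 j (by omega))
      rw [hαP (m + 1), hαP m, hβP m, show (m + 1) / 2 + 1 = (m - 1) / 2 + 2 by omega]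
      exact h
  · -- βP recurrence
    rcases Nat.eq_zero_or_pos m with rfl | hm
    · have hβ10 : β 1 0 = 1 := by
        have h := (hco 0).2 0 (by norm_num)
        rw [h, hα00, hβ00]
        norm_num
      rw [hβP 1, show (((1:ℕ) - 1) / 2 + 1) = 1 by norm_num, Finset.sum_range_one, hβ10,
        hc1, hc2]
      simp [map_ofNat]
      try push_cast
      try norm_num
    · have h := stepD2 m (m / 2) ((m - 1) / 2) rfl rfl hm (α m) (β m) (β (m + 1))
        (fun j hj => (hco m).2 j (by omega))
      rw [hβP (m + 1), hβP m, hαP m]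
      simp only [Nat.add_sub_cancel]
      exact h
end

section
/- If α_0(x) = 1, β_0(x) = 0 and for all m ≥ 0 one has α_{m+1}(x) = (4m+2) α_m(x) − 2x α_m'(x) + 3x β_m(x) + 4x^2 β_m'(x) and β_{m+1}(x) = α_m(x) + 4x α_m'(x) + (4m+3) β_m(x) + 2x β_m'(x), then for all m ≥ 1, every coefficient of α_m(x) in degrees 0 ≤ k ≤ ⌊m/2⌋ is positive and every coefficient of β_m(x) in degrees 0 ≤ k ≤ ⌊(m−1)/2⌋ is positive, with deg α_m ≤ ⌊m/2⌋ and deg β_m ≤ ⌊(m−1)/2⌋. -/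
open Polynomial

lemma abc_coeff_X_mul_deriv (p : Polynomial ℝ) (k : ℕ) :
    (X * derivative p).coeff k = k * p.coeff k := by
  cases k with
  | zero => simp [mul_coeff_zero]
  | succ n => rw [coeff_X_mul, coeff_derivative]; push_cast; ring

lemma abc_coeff_X2_mul_deriv (p : Polynomial ℝ) (k : ℕ) :
    (X ^ 2 * derivative p).coeff (k + 1) = k * p.coeff k := by
  cases k with
  | zero =>
      rw [pow_two, mul_assoc, show (0:ℕ)+1 = 0+1 from rfl, coeff_X_mul, mul_coeff_zero]
      simp
  | succ n =>
      rw [show n+1+1 = n+2 from rfl, coeff_X_pow_mul (derivative p) 2 n, coeff_derivative]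
      push_cast; ring

lemma abc_X_mul_coeff_zero (p : Polynomial ℝ) : (X * p).coeff 0 = 0 := by
  simp [mul_coeff_zero]

lemma abc_X2_mul_coeff_zero (p : Polynomial ℝ) : (X ^ 2 * p).coeff 0 = 0 := by
  simp [mul_coeff_zero]

lemma abc_cast2 (m : ℕ) : (4*(m:Polynomial ℝ)+2 : Polynomial ℝ) = C (4*(m:ℝ)+2) := by
  push_cast [map_add, map_mul]; simp [map_ofNat]

lemma abc_cast3 (m : ℕ) : (4*(m:Polynomial ℝ)+3 : Polynomial ℝ) = C (4*(m:ℝ)+3) := by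
  push_cast [map_add, map_mul]; simp [map_ofNat]

theorem alpha_beta_positive_coefficients (α β : ℕ → Polynomial ℝ)
    (hα0 : α 0 = 1) (hβ0 : β 0 = 0)
    (hαrec : ∀ m : ℕ, α (m + 1) =
      (4 * (m : Polynomial ℝ) + 2) * α m - 2 * Polynomial.X * Polynomial.derivative (α m)
        + 3 * Polynomial.X * β m + 4 * Polynomial.X ^ 2 * Polynomial.derivative (β m))
    (hβrec : ∀ m : ℕ, β (m + 1) =
      α m + 4 * Polynomial.X * Polynomial.derivative (α m)
        + (4 * (m : Polynomial ℝ) + 3) * β m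
        + 2 * Polynomial.X * Polynomial.derivative (β m)) :
    ∀ m : ℕ, 1 ≤ m →
      (∀ k ≤ m / 2, 0 < (α m).coeff k) ∧
      (∀ k ≤ (m - 1) / 2, 0 < (β m).coeff k) ∧
      (α m).natDegree ≤ m / 2 ∧ (β m).natDegree ≤ (m - 1) / 2 := by
  -- rewrite the three products with explicit constants
  have e2 : ∀ p : Polynomial ℝ, (2 : Polynomial ℝ) * X * p = C 2 * (X * p) := by
    intro p; rw [mul_assoc]; simp [map_ofNat]
  have e3 : ∀ p : Polynomial ℝ, (3 : Polynomial ℝ) * X * p = C 3 * (X * p) := by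
    intro p; rw [mul_assoc]; simp [map_ofNat]
  have e4 : ∀ p : Polynomial ℝ, (4 : Polynomial ℝ) * X ^ 2 * p = C 4 * (X ^ 2 * p) := by
    intro p; rw [mul_assoc]; simp [map_ofNat]
  have e4x : ∀ p : Polynomial ℝ, (4 : Polynomial ℝ) * X * p = C 4 * (X * p) := by
    intro p; rw [mul_assoc]; simp [map_ofNat]
  have hac0 : ∀ m : ℕ, (α (m+1)).coeff 0 = (4*(m:ℝ)+2) * (α m).coeff 0 := by
    intro m
    rw [hαrec m, abc_cast2, e2, e3, e4]
    simp only [coeff_sub, coeff_add, coeff_C_mul, abc_X_mul_coeff_zero, abc_X2_mul_coeff_zero,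
      mul_zero, add_zero, sub_zero]
  have hac : ∀ m k : ℕ, (α (m+1)).coeff (k+1) =
      (4*(m:ℝ)+2) * (α m).coeff (k+1) - 2*((k:ℝ)+1) * (α m).coeff (k+1)
        + 3 * (β m).coeff k + 4 * (k:ℝ) * (β m).coeff k := by
    intro m k
    rw [hαrec m, abc_cast2, e2, e3, e4]
    simp only [coeff_sub, coeff_add, coeff_C_mul, coeff_X_mul,
      abc_coeff_X2_mul_deriv, coeff_derivative]
    ring
  have hbc : ∀ m k : ℕ, (β (m+1)).coeff k =
      (α m).coeff k + 4*(k:ℝ)*(α m).coeff k + (4*(m:ℝ)+3)*(β m).coeff k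
        + 2*(k:ℝ)*(β m).coeff k := by
    intro m k
    rw [hβrec m, abc_cast3, e2, e4x]
    simp only [coeff_add, coeff_C_mul, abc_coeff_X_mul_deriv]
    ring
  intro m hm
  induction m with
  | zero => omega
  | succ n ih =>
    rcases Nat.eq_or_lt_of_le hm with h1 | h1
    · -- base case n + 1 = 1
      have hn : n = 0 := by omega
      subst hn
      have hA : α 1 = 2 := by rw [hαrec 0, hα0, hβ0]; simp
      have hB : β 1 = 1 := by rw [hβrec 0, hα0, hβ0]; simp
      refine ⟨?_, ?_, ?_, ?_⟩
      · intro k hk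
        interval_cases k
        simp [hA]
      · intro k hk
        interval_cases k
        simp [hB]
      · simp [hA]
      · simp [hB]
    · -- inductive step: n ≥ 1
      have hn1 : 1 ≤ n := by omega
      obtain ⟨pa, pb, da, db⟩ := ih hn1
      -- nonnegativity of all coefficients
      have na : ∀ k, 0 ≤ (α n).coeff k := by
        intro k
        rcases le_or_gt k (n/2) with h | h
        · exact (pa k h).le
        · rw [coeff_eq_zero_of_natDegree_lt (lt_of_le_of_lt da h)]
      have nb : ∀ k, 0 ≤ (β n).coeff k := by
        intro k
        rcases le_or_gt k ((n-1)/2) with h | h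
        · exact (pb k h).le
        · rw [coeff_eq_zero_of_natDegree_lt (lt_of_le_of_lt db h)]
      have za : ∀ k, n/2 < k → (α n).coeff k = 0 := fun k h =>
        coeff_eq_zero_of_natDegree_lt (lt_of_le_of_lt da h)
      have zb : ∀ k, (n-1)/2 < k → (β n).coeff k = 0 := fun k h =>
        coeff_eq_zero_of_natDegree_lt (lt_of_le_of_lt db h)
      refine ⟨?_, ?_, ?_, ?_⟩
      · -- positivity of α (n+1)
        intro k hk
        cases k with
        | zero =>
          rw [hac0]
          have := pa 0 (Nat.zero_le _)
          positivity
        | succ j =>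
          rw [hac n j]
          have hj : 2*j ≤ n - 1 := by omega
          have hjr : (2:ℝ)*((j:ℝ)+1) ≤ (n:ℝ)+1 := by
            have : 2*(j+1) ≤ n+1 := by omega
            exact_mod_cast this
          rcases le_or_gt (j+1) (n/2) with h | h
          · have ha := pa (j+1) h
            have hb := nb j
            nlinarith [na (j+1), Nat.one_le_cast (α := ℝ) |>.mpr hn1]
          · -- then j = (n-1)/2 and n odd
            have hb := pb j (by omega)
            have hA := na (j+1)
            nlinarith [Nat.one_le_cast (α := ℝ) |>.mpr hn1]
      · -- positivity of β (n+1)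
        intro k hk
        rw [hbc n k]
        have hk' : k ≤ n/2 := by omega
        have ha := pa k hk'
        have hb := nb k
        have hkr : (0:ℝ) ≤ k := Nat.cast_nonneg k
        nlinarith
      · -- degree of α (n+1)
        rw [natDegree_le_iff_coeff_eq_zero]
        intro k hk
        have hk1 : 1 ≤ k := by omega
        obtain ⟨j, rfl⟩ := Nat.exists_eq_add_of_le' hk1
        rw [hac n j]
        rw [za (j+1) (by omega), zb j (by omega)]
        ring
      · -- degree of β (n+1)
        rw [natDegree_le_iff_coeff_eq_zero]
        intro k hk
        rw [hbc n k, za k (by omega), zb k (by omega)]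
        ring
end
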